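/- arXiv:2001.05164 — 10 statements merged into one kernel-verified Lean document; each statement's English description precedes it below -/
import Mathlib

section
/- Let 𝒢 be a groupoid and let R be an object unital 𝒢-graded ring (with no assumption that the local identities are nonzero). Put 𝒢' = {σ ∈ 𝒢 : 1_{R_{r(σ)}} ≠ 0 and 1_{R_{d(σ)}} ≠ 0}. Then: (a) 𝒢' is closed under inversion, and if (σ,τ) is a composable pair with σ,τ ∈ 𝒢' then στ ∈ 𝒢' (so 𝒢' is a subgroupoid of 𝒢 whenever it is nonempty); (b) R_σ = {0} for every morphism σ ∉ 𝒢', hence R = ⊕_{σ∈𝒢'} R_σ; (c) 𝒢' contains every identity morphism of 𝒢 (i.e. 𝒢' is a wide subgroupoid) if and only if 1_{R_e} ≠ 0 for every object e. -/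
open CategoryTheory

universe u v

/-- The type of all morphisms of a groupoid `𝒢`, bundled with their source and target. -/
abbrev Mor (𝒢 : Type u) [Groupoid 𝒢] : Type _ := Σ (e f : 𝒢), e ⟶ f

/-- A grading of a (not necessarily unital) ring `R` by a groupoid `𝒢`:
`R` is the internal direct sum of additive subgroups `grade σ`, one for each
morphism `σ`, with `R_σ R_τ ⊆ R_{στ}` for composable pairs (note that the paper's
product `στ`, requiring `d(σ) = r(τ)`, is `τ ≫ σ` in categorical notation), and
`R_σ R_τ = 0` for non-composable pairs. -/
structure GroupoidGrading (𝒢 : Type u) [Groupoid 𝒢] (R : Type v) [NonUnitalRing R] where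
  grade : ∀ ⦃e f : 𝒢⦄, (e ⟶ f) → AddSubgroup R
  decompose : ∀ r : R, ∃ (s : Finset (Mor 𝒢)) (c : Mor 𝒢 → R),
    (∀ σ : Mor 𝒢, c σ ∈ grade σ.2.2) ∧ r = ∑ σ ∈ s, c σ
  indep : ∀ (s : Finset (Mor 𝒢)) (c : Mor 𝒢 → R),
    (∀ σ : Mor 𝒢, c σ ∈ grade σ.2.2) → (∑ σ ∈ s, c σ) = 0 → ∀ σ ∈ s, c σ = 0
  mul_mem : ∀ ⦃a b c : 𝒢⦄ (σ : b ⟶ c) (τ : a ⟶ b),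
    ∀ x ∈ grade σ, ∀ y ∈ grade τ, x * y ∈ grade (τ ≫ σ)
  mul_eq_zero : ∀ ⦃a b b' c : 𝒢⦄ (σ : b ⟶ c) (τ : a ⟶ b'), b' ≠ b →
    ∀ x ∈ grade σ, ∀ y ∈ grade τ, x * y = 0

/-- Object unitality data for a groupoid graded ring: a family of local identities
`one e ∈ R_e` such that `1_{R_{r(σ)}} x = x 1_{R_{d(σ)}} = x` for every homogeneous
`x ∈ R_σ` (in particular each `R_e` is a unital ring with identity `one e`). -/
structure ObjectUnital {𝒢 : Type u} [Groupoid 𝒢] {R : Type v} [NonUnitalRing R]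
    (g : GroupoidGrading 𝒢 R) where
  one : 𝒢 → R
  one_mem : ∀ e : 𝒢, one e ∈ g.grade (𝟙 e)
  one_mul : ∀ ⦃e f : 𝒢⦄ (σ : e ⟶ f), ∀ x ∈ g.grade σ, one f * x = x
  mul_one : ∀ ⦃e f : 𝒢⦄ (σ : e ⟶ f), ∀ x ∈ g.grade σ, x * one e = x

/-- For an object unital `𝒢`-graded ring (with no nonzero assumption on
the local identities), the set `𝒢' = {σ | 1_{R_{r(σ)}} ≠ 0 and 1_{R_{d(σ)}} ≠ 0}` is closed
under inversion and composition, every `R_σ` with `σ ∉ 𝒢'` is zero (so `R = ⊕_{σ ∈ 𝒢'} R_σ`),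
and `𝒢'` contains all identity morphisms iff all local identities are nonzero. -/
theorem stmt0 {𝒢 : Type u} [Groupoid 𝒢] {R : Type v} [NonUnitalRing R]
    (g : GroupoidGrading 𝒢 R) (U : ObjectUnital g)
    (G' : ∀ ⦃e f : 𝒢⦄, (e ⟶ f) → Prop)
    (hG' : ∀ ⦃e f : 𝒢⦄ (σ : e ⟶ f), G' σ ↔ (U.one f ≠ 0 ∧ U.one e ≠ 0)) :
    -- (a) `𝒢'` is closed under inversion and under composition of composable pairs
    (∀ ⦃e f : 𝒢⦄ (σ : e ⟶ f), G' σ → G' (Groupoid.inv σ)) ∧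
    (∀ ⦃a b c : 𝒢⦄ (σ : b ⟶ c) (τ : a ⟶ b), G' σ → G' τ → G' (τ ≫ σ)) ∧
    -- (b) `R_σ = {0}` for every `σ ∉ 𝒢'`, hence `R = ⊕_{σ ∈ 𝒢'} R_σ`
    (∀ ⦃e f : 𝒢⦄ (σ : e ⟶ f), ¬ G' σ → g.grade σ = ⊥) ∧
    -- (c) `𝒢'` is wide iff every local identity is nonzero
    ((∀ e : 𝒢, G' (𝟙 e)) ↔ ∀ e : 𝒢, U.one e ≠ 0) := by
  refine ⟨?_, ?_, ?_, ?_⟩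
  · intro e f σ h
    rw [hG'] at h ⊢
    exact ⟨h.2, h.1⟩
  · intro a b c σ τ hσ hτ
    rw [hG'] at hσ hτ ⊢
    exact ⟨hσ.1, hτ.2⟩
  · intro e f σ h
    rw [hG'] at h
    rw [not_and_or, not_not, not_not] at h
    ext x
    simp only [AddSubgroup.mem_bot]
    constructor
    · intro hx
      rcases h with h | h
      · rw [← U.one_mul σ x hx, h, zero_mul]
      · rw [← U.mul_one σ x hx, h, mul_zero]
    · rintro rfl; exact (g.grade σ).zero_mem
  · constructor
    · intro h e
      exact ((hG' _).mp (h e)).1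
    · intro h e
      exact (hG' _).mpr ⟨h e, h e⟩
end

section
/- Let 𝒢 be a groupoid and let R be a 𝒢-graded ring. The following are equivalent: (i) R is object unital; (ii) for every finite subset E of 𝒢₀ the ring R_{𝒢(E)} is unital. In that case, for every finite subset E of 𝒢₀ the multiplicative identity of R_{𝒢(E)} equals Σ_{e∈E} 1_{R_e}. -/
open CategoryTheory

universe u v

/-- The subring `R_{𝒢(E)} = ⊕_{σ ∈ 𝒢(E)} R_σ` determined by a set `E` of objects,
where `𝒢(E)` is the set of morphisms whose source and target both lie in `E`. -/
def gradePart {𝒢 : Type u} [Groupoid 𝒢] {R : Type v} [NonUnitalRing R]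
    (g : GroupoidGrading 𝒢 R) (E : Finset 𝒢) : AddSubgroup R :=
  ⨆ σ : {σ : Mor 𝒢 // σ.1 ∈ E ∧ σ.2.1 ∈ E}, g.grade (σ : Mor 𝒢).2.2

section Aux
variable {𝒢 : Type u} [Groupoid 𝒢] {R : Type v} [NonUnitalRing R]

lemma grade_le_gradePart (g : GroupoidGrading 𝒢 R) (E : Finset 𝒢) (σ : Mor 𝒢)
    (h1 : σ.1 ∈ E) (h2 : σ.2.1 ∈ E) : g.grade σ.2.2 ≤ gradePart g E :=
  le_iSup_of_le (⟨σ, h1, h2⟩ : {σ : Mor 𝒢 // σ.1 ∈ E ∧ σ.2.1 ∈ E}) le_rfl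

lemma key_left (g : GroupoidGrading 𝒢 R) (e : 𝒢) (v : R) :
    ∃ w ∈ g.grade (𝟙 e), ∀ ⦃a : 𝒢⦄ (σ : a ⟶ e), ∀ x ∈ g.grade σ, v * x = x → w * x = x := by
  classical
  obtain ⟨s, c, hc, hv⟩ := g.decompose v
  refine ⟨∑ τ ∈ s.filter (fun τ => τ = (⟨e, e, 𝟙 e⟩ : Mor 𝒢)), c τ, ?_, ?_⟩
  · refine AddSubgroup.sum_mem _ fun τ hτ => ?_
    obtain ⟨-, rfl⟩ := Finset.mem_filter.mp hτ
    exact hc ⟨e, e, 𝟙 e⟩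
  · intro a σ x hx hvx
    set m : Mor 𝒢 → Mor 𝒢 := fun τ =>
      if h : τ.1 = e then ⟨a, τ.2.1, σ ≫ (eqToHom h.symm ≫ τ.2.2)⟩ else τ with hm
    have hmval : ∀ (b : 𝒢) (φ : e ⟶ b), m ⟨e, b, φ⟩ = ⟨a, b, σ ≫ φ⟩ := by
      intro b φ
      simp [hm]
    set s₁ := s.filter (fun τ => τ.1 = e) with hs₁
    set t := insert (⟨a, e, σ⟩ : Mor 𝒢) (s₁.image m) with ht
    set d : Mor 𝒢 → R := fun ρ =>
      (∑ τ ∈ s₁.filter (fun τ => m τ = ρ), c τ * x)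
        - (if ρ = (⟨a, e, σ⟩ : Mor 𝒢) then x else 0) with hd
    have hdm : ∀ ρ : Mor 𝒢, d ρ ∈ g.grade ρ.2.2 := by
      intro ρ
      refine AddSubgroup.sub_mem _ (AddSubgroup.sum_mem _ ?_) ?_
      · rintro ⟨p, b, φ⟩ hτ
        rw [Finset.mem_filter] at hτ
        obtain ⟨hτ₁, hτ₂⟩ := hτ
        rw [hs₁, Finset.mem_filter] at hτ₁
        obtain ⟨hτs, hpe⟩ := hτ₁
        have hpe' : e = p := Eq.symm hpe
        subst hpe'
        rw [← hτ₂, hmval b φ]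
        exact g.mul_mem φ σ _ (hc ⟨e, b, φ⟩) x hx
      · split_ifs with h
        · subst h; exact hx
        · exact zero_mem _
    have h2 : ∑ ρ ∈ t, (if ρ = (⟨a, e, σ⟩ : Mor 𝒢) then x else 0) = x := by
      rw [Finset.sum_ite_eq' t _ (fun _ => x), if_pos (Finset.mem_insert_self _ _)]
    have h1 : ∑ ρ ∈ t, ∑ τ ∈ s₁.filter (fun τ => m τ = ρ), c τ * x = ∑ τ ∈ s₁, c τ * x :=
      Finset.sum_fiberwise_of_maps_to
        (fun τ hτ => Finset.mem_insert_of_mem (Finset.mem_image_of_mem m hτ)) _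
    have h3 : ∑ τ ∈ s₁, c τ * x = x := by
      rw [hs₁, Finset.sum_filter_of_ne, ← Finset.sum_mul, ← hv, hvx]
      intro τ hτ hne
      by_contra hpe
      exact hne (g.mul_eq_zero τ.2.2 σ (fun h => hpe h.symm) (c τ) (hc τ) x hx)
    have hsum : ∑ ρ ∈ t, d ρ = 0 := by
      simp only [hd]
      rw [Finset.sum_sub_distrib, h1, h2, h3, sub_self]
    have h0 : ∑ τ ∈ s₁.filter (fun τ => m τ = (⟨a, e, σ⟩ : Mor 𝒢)), c τ * x = x := by
      have := g.indep t d hdm hsum _ (Finset.mem_insert_self _ _)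
      simpa [hd, sub_eq_zero] using this
    have hfe : s₁.filter (fun τ => m τ = (⟨a, e, σ⟩ : Mor 𝒢))
        = s.filter (fun τ => τ = (⟨e, e, 𝟙 e⟩ : Mor 𝒢)) := by
      rw [hs₁, Finset.filter_filter]
      apply Finset.filter_congr
      rintro ⟨p, b, φ⟩ hs
      constructor
      · rintro ⟨hpe, h2⟩
        have hpe' : e = p := Eq.symm hpe
        subst hpe'
        rw [hmval b φ] at h2
        simp only [Sigma.mk.inj_iff, heq_eq_eq, true_and] at h2
        obtain ⟨hbe, h2⟩ := h2
        have hbe' : e = b := Eq.symm hbe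
        subst hbe'
        have hφ : σ ≫ φ = σ ≫ 𝟙 e := by simpa using eq_of_heq h2
        have hφ' : φ = 𝟙 e := (cancel_epi σ).mp hφ
        subst hφ'
        rfl
      · intro hτι
        simp only [Sigma.mk.inj_iff] at hτι
        obtain ⟨hp, hτι⟩ := hτι
        have hp' : e = p := Eq.symm hp
        subst hp'
        rw [heq_eq_eq] at hτι
        simp only [Sigma.mk.inj_iff] at hτι
        obtain ⟨hb, hτι⟩ := hτι
        have hb' : e = b := Eq.symm hb
        subst hb'
        rw [heq_eq_eq] at hτι
        subst hτι
        refine ⟨rfl, ?_⟩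
        rw [hmval e (𝟙 e)]
        simp
    rw [Finset.sum_mul, ← hfe]
    exact h0

lemma key_right (g : GroupoidGrading 𝒢 R) (e : 𝒢) (v : R) :
    ∃ w ∈ g.grade (𝟙 e), ∀ ⦃b : 𝒢⦄ (σ : e ⟶ b), ∀ x ∈ g.grade σ, x * v = x → x * w = x := by
  classical
  obtain ⟨s, c, hc, hv⟩ := g.decompose v
  refine ⟨∑ τ ∈ s.filter (fun τ => τ = (⟨e, e, 𝟙 e⟩ : Mor 𝒢)), c τ, ?_, ?_⟩
  · refine AddSubgroup.sum_mem _ fun τ hτ => ?_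
    obtain ⟨-, rfl⟩ := Finset.mem_filter.mp hτ
    exact hc ⟨e, e, 𝟙 e⟩
  · intro b σ x hx hvx
    set m : Mor 𝒢 → Mor 𝒢 := fun τ =>
      if h : τ.2.1 = e then ⟨τ.1, b, (τ.2.2 ≫ eqToHom h) ≫ σ⟩ else τ with hm
    have hmval : ∀ (p : 𝒢) (φ : p ⟶ e), m ⟨p, e, φ⟩ = ⟨p, b, φ ≫ σ⟩ := by
      intro p φ
      simp [hm]
    set s₁ := s.filter (fun τ => τ.2.1 = e) with hs₁
    set t := insert (⟨e, b, σ⟩ : Mor 𝒢) (s₁.image m) with ht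
    set d : Mor 𝒢 → R := fun ρ =>
      (∑ τ ∈ s₁.filter (fun τ => m τ = ρ), x * c τ)
        - (if ρ = (⟨e, b, σ⟩ : Mor 𝒢) then x else 0) with hd
    have hdm : ∀ ρ : Mor 𝒢, d ρ ∈ g.grade ρ.2.2 := by
      intro ρ
      refine AddSubgroup.sub_mem _ (AddSubgroup.sum_mem _ ?_) ?_
      · rintro ⟨p, q, φ⟩ hτ
        rw [Finset.mem_filter] at hτ
        obtain ⟨hτ₁, hτ₂⟩ := hτ
        rw [hs₁, Finset.mem_filter] at hτ₁
        obtain ⟨hτs, hqe⟩ := hτ₁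
        have hqe' : e = q := Eq.symm hqe
        subst hqe'
        rw [← hτ₂, hmval p φ]
        exact g.mul_mem σ φ x hx _ (hc ⟨p, e, φ⟩)
      · split_ifs with h
        · subst h; exact hx
        · exact zero_mem _
    have h2 : ∑ ρ ∈ t, (if ρ = (⟨e, b, σ⟩ : Mor 𝒢) then x else 0) = x := by
      rw [Finset.sum_ite_eq' t _ (fun _ => x), if_pos (Finset.mem_insert_self _ _)]
    have h1 : ∑ ρ ∈ t, ∑ τ ∈ s₁.filter (fun τ => m τ = ρ), x * c τ = ∑ τ ∈ s₁, x * c τ :=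
      Finset.sum_fiberwise_of_maps_to
        (fun τ hτ => Finset.mem_insert_of_mem (Finset.mem_image_of_mem m hτ)) _
    have h3 : ∑ τ ∈ s₁, x * c τ = x := by
      rw [hs₁, Finset.sum_filter_of_ne, ← Finset.mul_sum, ← hv, hvx]
      intro τ hτ hne
      by_contra hqe
      exact hne (g.mul_eq_zero σ τ.2.2 hqe x hx (c τ) (hc τ))
    have hsum : ∑ ρ ∈ t, d ρ = 0 := by
      simp only [hd]
      rw [Finset.sum_sub_distrib, h1, h2, h3, sub_self]
    have h0 : ∑ τ ∈ s₁.filter (fun τ => m τ = (⟨e, b, σ⟩ : Mor 𝒢)), x * c τ = x := by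
      have := g.indep t d hdm hsum _ (Finset.mem_insert_self _ _)
      simpa [hd, sub_eq_zero] using this
    have hfe : s₁.filter (fun τ => m τ = (⟨e, b, σ⟩ : Mor 𝒢))
        = s.filter (fun τ => τ = (⟨e, e, 𝟙 e⟩ : Mor 𝒢)) := by
      rw [hs₁, Finset.filter_filter]
      apply Finset.filter_congr
      rintro ⟨p, q, φ⟩ hs
      constructor
      · rintro ⟨hqe, h2⟩
        have hqe' : e = q := Eq.symm hqe
        subst hqe'
        rw [hmval p φ] at h2
        simp only [Sigma.mk.inj_iff] at h2
        obtain ⟨hpe, h2⟩ := h2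
        have hpe' : e = p := Eq.symm hpe
        subst hpe'
        rw [heq_eq_eq] at h2
        simp only [Sigma.mk.inj_iff, heq_eq_eq, true_and] at h2
        have hφ : φ ≫ σ = 𝟙 e ≫ σ := by simpa using h2
        have hφ' : φ = 𝟙 e := (cancel_mono σ).mp hφ
        subst hφ'
        rfl
      · intro hτι
        simp only [Sigma.mk.inj_iff] at hτι
        obtain ⟨hp, hτι⟩ := hτι
        have hp' : e = p := Eq.symm hp
        subst hp'
        rw [heq_eq_eq] at hτι
        simp only [Sigma.mk.inj_iff] at hτι
        obtain ⟨hq, hτι⟩ := hτι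
        have hq' : e = q := Eq.symm hq
        subst hq'
        rw [heq_eq_eq] at hτι
        subst hτι
        refine ⟨rfl, ?_⟩
        rw [hmval e (𝟙 e)]
        simp
    rw [Finset.mul_sum, ← hfe]
    exact h0

lemma part2 (g : GroupoidGrading 𝒢 R) (U : ObjectUnital g) (E : Finset 𝒢) :
    (∑ e ∈ E, U.one e) ∈ gradePart g E ∧
    ∀ x ∈ gradePart g E, (∑ e ∈ E, U.one e) * x = x ∧ x * (∑ e ∈ E, U.one e) = x := by
  classical
  constructor
  · exact AddSubgroup.sum_mem _ fun e he =>
      grade_le_gradePart g E ⟨e, e, 𝟙 e⟩ he he (U.one_mem e)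
  · intro x hx
    refine AddSubgroup.iSup_induction
      (C := fun y => (∑ e ∈ E, U.one e) * y = y ∧ y * (∑ e ∈ E, U.one e) = y) _ hx ?_ ?_ ?_
    · rintro ⟨⟨p, q, φ⟩, hp, hq⟩ y hy
      constructor
      · rw [Finset.sum_mul, Finset.sum_eq_single_of_mem q hq]
        · exact U.one_mul φ y hy
        · intro e he hne
          exact g.mul_eq_zero (𝟙 e) φ hne.symm (U.one e) (U.one_mem e) y hy
      · rw [Finset.mul_sum, Finset.sum_eq_single_of_mem p hp]
        · exact U.mul_one φ y hy
        · intro e he hne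
          exact g.mul_eq_zero φ (𝟙 e) hne y hy (U.one e) (U.one_mem e)
    · exact ⟨mul_zero _, zero_mul _⟩
    · rintro y z ⟨hy1, hy2⟩ ⟨hz1, hz2⟩
      exact ⟨by rw [mul_add, hy1, hz1], by rw [add_mul, hy2, hz2]⟩

noncomputable def construct (g : GroupoidGrading 𝒢 R)
    (h : ∀ E : Finset 𝒢, ∃ u ∈ gradePart g E, ∀ x ∈ gradePart g E, u * x = x ∧ x * u = x) :
    ObjectUnital g := by
  classical
  choose u hu₁ hu₂ using h
  choose wL hwL₁ hwL₂ using fun (e : 𝒢) (v : R) => key_left g e v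
  choose wR hwR₁ hwR₂ using fun (e : 𝒢) (v : R) => key_right g e v
  have hmem : ∀ (e : 𝒢) (E : Finset 𝒢), e ∈ E → ∀ z ∈ g.grade (𝟙 e), z ∈ gradePart g E :=
    fun e E he z hz => grade_le_gradePart g E ⟨e, e, 𝟙 e⟩ he he hz
  have hself : ∀ e : 𝒢, e ∈ ({e} : Finset 𝒢) := fun e => Finset.mem_singleton_self e
  have step1 : ∀ e : 𝒢, wL e (u {e}) = wR e (u {e}) := by
    intro e
    have hB := hwL₁ e (u {e})
    have hB' := hwR₁ e (u {e})
    have e1 : wL e (u {e}) * wR e (u {e}) = wR e (u {e}) :=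
      hwL₂ e (u {e}) (𝟙 e) _ hB'
        ((hu₂ {e} _ (hmem e {e} (hself e) _ hB')).1)
    have e2 : wL e (u {e}) * wR e (u {e}) = wL e (u {e}) :=
      hwR₂ e (u {e}) (𝟙 e) _ hB
        ((hu₂ {e} _ (hmem e {e} (hself e) _ hB)).2)
    rw [← e1, e2]
  have eqL : ∀ (E : Finset 𝒢) (e : 𝒢), e ∈ E → wL e (u E) = wL e (u {e}) := by
    intro E e he
    have hA := hwL₁ e (u E)
    have h1 : wL e (u E) * wL e (u {e}) = wL e (u {e}) :=
      hwL₂ e (u E) (𝟙 e) _ (hwL₁ e (u {e}))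
        ((hu₂ E _ (hmem e E he _ (hwL₁ e (u {e})))).1)
    have h2 : wL e (u E) * wL e (u {e}) = wL e (u E) := by
      rw [step1 e]
      exact hwR₂ e (u {e}) (𝟙 e) _ hA ((hu₂ {e} _ (hmem e {e} (hself e) _ hA)).2)
    rw [← h2, h1]
  have eqR : ∀ (E : Finset 𝒢) (e : 𝒢), e ∈ E → wR e (u E) = wL e (u {e}) := by
    intro E e he
    have hC := hwR₁ e (u E)
    have h1 : wL e (u {e}) * wR e (u E) = wR e (u E) :=
      hwL₂ e (u {e}) (𝟙 e) _ hC ((hu₂ {e} _ (hmem e {e} (hself e) _ hC)).1)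
    have h2 : wL e (u {e}) * wR e (u E) = wL e (u {e}) := by
      rw [step1 e]
      exact hwR₂ e (u E) (𝟙 e) _ (hwR₁ e (u {e}))
        ((hu₂ E _ (hmem e E he _ (hwR₁ e (u {e})))).2)
    rw [← h1, h2, step1 e]
  refine ⟨fun e => wL e (u {e}), fun e => hwL₁ e (u {e}), ?_, ?_⟩
  · intro e f σ x hx
    have hxm : x ∈ gradePart g {e, f} :=
      grade_le_gradePart g {e, f} ⟨e, f, σ⟩ (by simp) (by simp) hx
    have := hwL₂ f (u {e, f}) σ x hx ((hu₂ {e, f} x hxm).1)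
    rwa [eqL {e, f} f (by simp)] at this
  · intro e f σ x hx
    have hxm : x ∈ gradePart g {e, f} :=
      grade_le_gradePart g {e, f} ⟨e, f, σ⟩ (by simp) (by simp) hx
    have := hwR₂ e (u {e, f}) σ x hx ((hu₂ {e, f} x hxm).2)
    rwa [eqR {e, f} e (by simp)] at this

end Aux

/-- A groupoid graded ring `R` is object unital iff for every finite set
`E` of objects the ring `R_{𝒢(E)}` is unital; in that case the identity of `R_{𝒢(E)}`
is `∑_{e ∈ E} 1_{R_e}`. -/
theorem stmt1 {𝒢 : Type u} [Groupoid 𝒢] {R : Type v} [NonUnitalRing R]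
    (g : GroupoidGrading 𝒢 R) :
    (Nonempty (ObjectUnital g) ↔
      ∀ E : Finset 𝒢, ∃ u ∈ gradePart g E, ∀ x ∈ gradePart g E, u * x = x ∧ x * u = x) ∧
    (∀ (U : ObjectUnital g) (E : Finset 𝒢),
      (∑ e ∈ E, U.one e) ∈ gradePart g E ∧
      ∀ x ∈ gradePart g E, (∑ e ∈ E, U.one e) * x = x ∧ x * (∑ e ∈ E, U.one e) = x) := by

  refine ⟨⟨?_, ?_⟩, fun U E => part2 g U E⟩
  · rintro ⟨U⟩ E
    obtain ⟨h1, h2⟩ := part2 g U E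
    exact ⟨_, h1, h2⟩
  · intro h
    exact ⟨construct g h⟩
end

section
/- Let 𝒢 be a groupoid and let R be an object unital 𝒢-graded ring. The following are equivalent: (i) R is strongly graded; (ii) for every finite subset E of 𝒢₀ the ring R_{𝒢(E)} is strongly 𝒢(E)-graded; (iii) R_{r(σ)} = R_σ R_{σ⁻¹} for every morphism σ; (iv) 1_{R_{r(σ)}} ∈ R_σ R_{σ⁻¹} for every morphism σ. -/
open CategoryTheory

universe u v

open Pointwise in
/-- The additive subgroup generated by all products `x * y` with `x ∈ A`, `y ∈ B`,
i.e. the set of finite sums of such products. -/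
def sgMul {R : Type v} [NonUnitalRing R] (A B : AddSubgroup R) : AddSubgroup R :=
  AddSubgroup.closure ((A : Set R) * (B : Set R))

/-- For an object unital `𝒢`-graded ring `R`, the following are
equivalent: (i) `R` is strongly graded; (ii) for every finite set `E` of objects the ring
`R_{𝒢(E)}` is strongly `𝒢(E)`-graded; (iii) `R_{r(σ)} = R_σ R_{σ⁻¹}` for all `σ`;
(iv) `1_{R_{r(σ)}} ∈ R_σ R_{σ⁻¹}` for all `σ`. -/
theorem stmt2 {𝒢 : Type u} [Groupoid 𝒢] {R : Type v} [NonUnitalRing R]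
    (g : GroupoidGrading 𝒢 R) (U : ObjectUnital g) :
    List.TFAE
      [ -- (i) `R` is strongly graded
        ∀ ⦃a b c : 𝒢⦄ (σ : b ⟶ c) (τ : a ⟶ b),
          sgMul (g.grade σ) (g.grade τ) = g.grade (τ ≫ σ),
        -- (ii) every `R_{𝒢(E)}`, for `E ⊆ 𝒢₀` finite, is strongly `𝒢(E)`-graded
        ∀ E : Finset 𝒢, ∀ ⦃a b c : 𝒢⦄, a ∈ E → b ∈ E → c ∈ E →
          ∀ (σ : b ⟶ c) (τ : a ⟶ b),
            sgMul (g.grade σ) (g.grade τ) = g.grade (τ ≫ σ),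
        -- (iii) `R_{r(σ)} = R_σ R_{σ⁻¹}`
        ∀ ⦃e f : 𝒢⦄ (σ : e ⟶ f),
          sgMul (g.grade σ) (g.grade (Groupoid.inv σ)) = g.grade (𝟙 f),
        -- (iv) `1_{R_{r(σ)}} ∈ R_σ R_{σ⁻¹}`
        ∀ ⦃e f : 𝒢⦄ (σ : e ⟶ f),
          U.one f ∈ sgMul (g.grade σ) (g.grade (Groupoid.inv σ)) ] := by
  classical
  tfae_have 1 → 2 := fun h E a b c _ _ _ σ τ => h σ τ
  tfae_have 2 → 3 := by
    intro h e f σ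
    have := h {e, f} (by simp) (by simp) (by simp) σ (Groupoid.inv σ)
    simpa using this
  tfae_have 3 → 4 := by
    intro h e f σ
    exact (h σ).symm ▸ U.one_mem f
  tfae_have 4 → 1 := by
    intro h a b c σ τ
    apply le_antisymm
    · apply (AddSubgroup.closure_le _).2
      rintro z ⟨x, hx, y, hy, rfl⟩
      exact g.mul_mem σ τ x hx y hy
    · intro r hr
      have h1 : U.one c * r = r := U.one_mul (τ ≫ σ) r hr
      rw [← h1]
      refine AddSubgroup.closure_induction ?_ ?_ ?_ ?_ (h σ)
      · rintro z ⟨u, hu, v, hv, rfl⟩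
        have hv' : v * r ∈ g.grade ((τ ≫ σ) ≫ Groupoid.inv σ) :=
          g.mul_mem (Groupoid.inv σ) (τ ≫ σ) v hv r hr
        simp only [Category.assoc, Groupoid.comp_inv, Category.comp_id] at hv'
        rw [mul_assoc]
        exact AddSubgroup.subset_closure ⟨u, hu, v * r, hv', rfl⟩
      · rw [zero_mul]; exact zero_mem _
      · intro x y _ _ hx hy
        rw [add_mul]; exact add_mem hx hy
      · intro x _ hx
        rw [neg_mul]; exact neg_mem hx
  tfae_finish
end

section
/- Let (A, 𝒢, α, β) be an object crossed system. Then the product on A ⋊^α_β 𝒢 is associative, so A ⋊^α_β 𝒢 is a ring; with the grading (A ⋊^α_β 𝒢)_σ = A_{r(σ)} u_σ it is an object unital 𝒢-graded ring whose local identities are 1_{A_e} u_e for objects e; and it is an object crossed product: for every morphism σ the element β_{σ,σ⁻¹}⁻¹ u_σ ∈ (A ⋊^α_β 𝒢)_σ is object invertible, with object inverse 1_{A_{d(σ)}} u_{σ⁻¹}. -/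
open CategoryTheory

universe u v

/-- An object crossed system `(A, 𝒢, α, β)`: a family of nonzero unital rings `A e`
indexed by the objects of `𝒢`, a weak action `α` assigning to each morphism
`σ : e ⟶ f` (so `d(σ) = e`, `r(σ) = f`) a ring isomorphism `α σ : A e ≃+* A f` with
`α (𝟙 e) = id`, and an `α`-cocycle `β` assigning to each composable pair (in the paper's
notation `β_{σ,τ}` for `d(σ) = r(τ)`, i.e. `τ : a ⟶ b`, `σ : b ⟶ c`) a unit of `A c`. -/
structure ObjectCrossedSystem (𝒢 : Type u) [Groupoid 𝒢]
    (A : 𝒢 → Type v) [∀ e, Ring (A e)] where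
  nontriv : ∀ e : 𝒢, (0 : A e) ≠ 1
  α : ∀ ⦃e f : 𝒢⦄, (e ⟶ f) → (A e ≃+* A f)
  α_id : ∀ e : 𝒢, α (𝟙 e) = RingEquiv.refl (A e)
  β : ∀ ⦃a b c : 𝒢⦄, (b ⟶ c) → (a ⟶ b) → (A c)ˣ
  β_id_right : ∀ ⦃b c : 𝒢⦄ (σ : b ⟶ c), β σ (𝟙 b) = 1
  β_id_left : ∀ ⦃b c : 𝒢⦄ (σ : b ⟶ c), β (𝟙 c) σ = 1
  α_α : ∀ ⦃a b c : 𝒢⦄ (σ : b ⟶ c) (τ : a ⟶ b) (x : A a),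
    α σ (α τ x) = (β σ τ : A c) * α (τ ≫ σ) x * (((β σ τ)⁻¹ : (A c)ˣ) : A c)
  cocycle : ∀ ⦃a b c d : 𝒢⦄ (σ : c ⟶ d) (τ : b ⟶ c) (ρ : a ⟶ b),
    (β σ τ : A d) * (β (τ ≫ σ) ρ : A d) = α σ (β τ ρ : A c) * (β σ (ρ ≫ τ) : A d)

/-- The underlying additive group of the crossed product `A ⋊^α_β 𝒢`: finitely supported
families `(a_σ)` indexed by the morphisms of `𝒢` with `a_σ ∈ A_{r(σ)}`; the element
`a u_σ` is `uElt σ a` below. -/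
abbrev CrossedProd (𝒢 : Type u) [Groupoid 𝒢] (A : 𝒢 → Type v) [∀ e, AddCommGroup (A e)] :=
  Π₀ σ : Mor 𝒢, A σ.2.1

open Classical in
/-- The element `a u_σ` of the crossed product. -/
noncomputable def uElt {𝒢 : Type u} [Groupoid 𝒢] {A : 𝒢 → Type v} [∀ e, AddCommGroup (A e)]
    {e f : 𝒢} (σ : e ⟶ f) (a : A f) : CrossedProd 𝒢 A :=
  DFinsupp.single (⟨e, f, σ⟩ : Mor 𝒢) a

/-- The element `1_{A_e} u_e` of the crossed product. -/
noncomputable def cpOne {𝒢 : Type u} [Groupoid 𝒢] (A : 𝒢 → Type v) [∀ e, Ring (A e)]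
    (e : 𝒢) : CrossedProd 𝒢 A :=
  uElt (𝟙 e) (1 : A e)

open Classical in
/-- The product of the crossed product `A ⋊^α_β 𝒢`, determined biadditively by
`(a u_σ)(b u_τ) = a α_σ(b) β_{σ,τ} u_{στ}` for composable `(σ,τ)` (i.e. `d(σ) = r(τ)`;
 in categorical notation `στ = τ ≫ σ`) and `(a u_σ)(b u_τ) = 0` otherwise. -/
noncomputable def cpMul {𝒢 : Type u} [Groupoid 𝒢] {A : 𝒢 → Type v} [∀ e, Ring (A e)]
    (S : ObjectCrossedSystem 𝒢 A) (x y : CrossedProd 𝒢 A) : CrossedProd 𝒢 A :=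
  x.sum fun σ a => y.sum fun τ b =>
    if h : τ.2.1 = σ.1 then
      uElt ((τ.2.2 ≫ eqToHom h) ≫ σ.2.2)
        (a * S.α σ.2.2 (cast (congrArg A h) b) * (S.β σ.2.2 (τ.2.2 ≫ eqToHom h) : A σ.2.1))
    else 0

section Lemmas
variable {𝒢 : Type u} [Groupoid 𝒢] {A : 𝒢 → Type v} [∀ e, Ring (A e)]
  (S : ObjectCrossedSystem 𝒢 A)

lemma uElt_zero {e f : 𝒢} (σ : e ⟶ f) : uElt σ (0 : A f) = 0 := by
  classical exact DFinsupp.single_zero _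

lemma uElt_add {e f : 𝒢} (σ : e ⟶ f) (a b : A f) :
    uElt σ (a + b) = uElt σ a + uElt σ b := by
  classical exact DFinsupp.single_add _ _ _

lemma cpMul_zero_left (y : CrossedProd 𝒢 A) : cpMul S 0 y = 0 := by
  classical
  simp [cpMul, DFinsupp.sum_zero_index]

lemma cpMul_zero_right (x : CrossedProd 𝒢 A) : cpMul S x 0 = 0 := by
  classical
  simp [cpMul, DFinsupp.sum_zero_index]

lemma cpMul_add_right (x y z : CrossedProd 𝒢 A) :
    cpMul S x (y + z) = cpMul S x y + cpMul S x z := by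
  classical
  unfold cpMul
  rw [← DFinsupp.sum_add]
  refine congrArg _ (funext fun σ => funext fun a => ?_)
  rw [DFinsupp.sum_add_index]
  · rintro ⟨ta, tb, tm⟩
    dsimp only
    split
    · rename_i h; subst h; simp [uElt_zero]
    · rfl
  · rintro ⟨ta, tb, tm⟩ b1 b2
    dsimp only
    split
    · rename_i h; subst h; simp [uElt_add, mul_add, add_mul, map_add]
    · simp

lemma cpMul_add_left (x y z : CrossedProd 𝒢 A) :
    cpMul S (x + y) z = cpMul S x z + cpMul S y z := by
  classical
  unfold cpMul
  rw [DFinsupp.sum_add_index]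
  · intro σ
    refine DFinsupp.sum_eq_zero fun τ => ?_
    split <;> simp [uElt_zero]
  · intro σ a1 a2
    rw [← DFinsupp.sum_add]
    refine congrArg _ (funext fun τ => funext fun b => ?_)
    split <;> simp [uElt_add, add_mul]

lemma cpMul_uElt_uElt {a b c : 𝒢} (σ : b ⟶ c) (τ : a ⟶ b) (x : A c) (y : A b) :
    cpMul S (uElt σ x) (uElt τ y) = uElt (τ ≫ σ) (x * S.α σ y * (S.β σ τ : A c)) := by
  classical
  unfold cpMul uElt
  rw [DFinsupp.sum_single_index, DFinsupp.sum_single_index]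
  · simp
    congr 1 <;> simp
  · simp
  · rw [DFinsupp.sum_single_index] <;> simp

lemma cpMul_uElt_uElt_ne {a b b' c : 𝒢} (σ : b ⟶ c) (τ : a ⟶ b') (h : b' ≠ b)
    (x : A c) (y : A b') : cpMul S (uElt σ x) (uElt τ y) = 0 := by
  classical
  unfold cpMul uElt
  rw [DFinsupp.sum_single_index, DFinsupp.sum_single_index]
  · exact dif_neg h
  · exact dif_neg h
  · rw [DFinsupp.sum_single_index]
    · exact dif_neg h
    · exact dif_neg h

end Lemmas

section Lemmas2
variable {𝒢 : Type u} [Groupoid 𝒢] {A : 𝒢 → Type v} [∀ e, Ring (A e)]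
  (S : ObjectCrossedSystem 𝒢 A)

lemma cpMul_assoc_uElt {a₁ b₁ a₂ b₂ a₃ b₃ : 𝒢} (σ : a₁ ⟶ b₁) (τ : a₂ ⟶ b₂)
    (ρ : a₃ ⟶ b₃) (x : A b₁) (y : A b₂) (z : A b₃) :
    cpMul S (cpMul S (uElt σ x) (uElt τ y)) (uElt ρ z) =
      cpMul S (uElt σ x) (cpMul S (uElt τ y) (uElt ρ z)) := by
  by_cases h1 : b₂ = a₁
  · subst h1
    by_cases h2 : b₃ = a₂
    · subst h2
      rw [cpMul_uElt_uElt, cpMul_uElt_uElt, cpMul_uElt_uElt, cpMul_uElt_uElt]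
      congr 1
      · simp
      · rw [map_mul, map_mul, S.α_α]
        simp only [mul_assoc]
        rw [← S.cocycle]
        simp [mul_assoc, Units.inv_mul_cancel_left]
    · rw [cpMul_uElt_uElt, cpMul_uElt_uElt_ne S _ _ h2, cpMul_uElt_uElt_ne S _ _ h2,
        cpMul_zero_right]
  · rw [cpMul_uElt_uElt_ne S _ _ h1, cpMul_zero_left]
    by_cases h2 : b₃ = a₂
    · subst h2
      rw [cpMul_uElt_uElt, cpMul_uElt_uElt_ne S _ _ h1]
    · rw [cpMul_uElt_uElt_ne S _ _ h2, cpMul_zero_right]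

lemma cpOne_mul {e f : 𝒢} (σ : e ⟶ f) (x : A f) :
    cpMul S (cpOne A f) (uElt σ x) = uElt σ x := by
  rw [cpOne, cpMul_uElt_uElt]
  congr 1
  · simp
  · simp [S.α_id, S.β_id_left]

lemma mul_cpOne {e f : 𝒢} (σ : e ⟶ f) (x : A f) :
    cpMul S (uElt σ x) (cpOne A e) = uElt σ x := by
  rw [cpOne, cpMul_uElt_uElt]
  congr 1
  · simp
  · simp [S.β_id_right]

end Lemmas2

section Lemmas3
variable {𝒢 : Type u} [Groupoid 𝒢] {A : 𝒢 → Type v} [∀ e, Ring (A e)]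
  (S : ObjectCrossedSystem 𝒢 A)

open Classical in
lemma single_eq_uElt (i : Mor 𝒢) (a : A i.2.1) :
    (DFinsupp.single i a : CrossedProd 𝒢 A) = uElt i.2.2 a := by
  obtain ⟨e, f, m⟩ := i
  rfl

lemma cpMul_assoc1 {e₁ f₁ e₂ f₂ : 𝒢} (m₁ : e₁ ⟶ f₁) (m₂ : e₂ ⟶ f₂)
    (a : A f₁) (b : A f₂) (z : CrossedProd 𝒢 A) :
    cpMul S (cpMul S (uElt m₁ a) (uElt m₂ b)) z =
      cpMul S (uElt m₁ a) (cpMul S (uElt m₂ b) z) := by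
  classical
  induction z using DFinsupp.induction with
  | h0 => rw [cpMul_zero_right, cpMul_zero_right, cpMul_zero_right]
  | ha i c g _ _ ih =>
      rw [cpMul_add_right, cpMul_add_right, cpMul_add_right, ih, single_eq_uElt (A := A),
        cpMul_assoc_uElt]

lemma cpMul_assoc2 {e₁ f₁ : 𝒢} (m₁ : e₁ ⟶ f₁) (a : A f₁)
    (y z : CrossedProd 𝒢 A) :
    cpMul S (cpMul S (uElt m₁ a) y) z = cpMul S (uElt m₁ a) (cpMul S y z) := by
  classical
  induction y using DFinsupp.induction with
  | h0 => simp only [cpMul_zero_left, cpMul_zero_right]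
  | ha i b g _ _ ih =>
      rw [cpMul_add_right, cpMul_add_left, cpMul_add_left, cpMul_add_right, ih,
        single_eq_uElt (A := A), cpMul_assoc1]

lemma cpMul_assoc (x y z : CrossedProd 𝒢 A) :
    cpMul S (cpMul S x y) z = cpMul S x (cpMul S y z) := by
  classical
  induction x using DFinsupp.induction with
  | h0 => rw [cpMul_zero_left, cpMul_zero_left, cpMul_zero_left]
  | ha i a g _ _ ih =>
      rw [cpMul_add_left, cpMul_add_left, cpMul_add_left, ih, single_eq_uElt (A := A),
        cpMul_assoc2]

lemma cp_inv_right {e f : 𝒢} (σ : e ⟶ f) :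
    cpMul S (uElt σ ((((S.β σ (Groupoid.inv σ))⁻¹ : (A f)ˣ)) : A f))
      (uElt (Groupoid.inv σ) (1 : A e)) = cpOne A f := by
  rw [cpMul_uElt_uElt, cpOne]
  rw [show (Groupoid.inv σ ≫ σ) = 𝟙 f from Groupoid.inv_comp σ]
  congr 1
  simp

lemma β_inv (e f : 𝒢) (σ : e ⟶ f) :
    (S.β (Groupoid.inv σ) σ : A e) = S.α (Groupoid.inv σ) (S.β σ (Groupoid.inv σ) : A f) := by
  have h := S.cocycle (Groupoid.inv σ) σ (Groupoid.inv σ)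
  rw [show (σ ≫ Groupoid.inv σ) = 𝟙 e from Groupoid.comp_inv σ,
    show (Groupoid.inv σ ≫ σ) = 𝟙 f from Groupoid.inv_comp σ, S.β_id_left, S.β_id_right] at h
  simpa using h

lemma cp_inv_left {e f : 𝒢} (σ : e ⟶ f) :
    cpMul S (uElt (Groupoid.inv σ) (1 : A e))
      (uElt σ ((((S.β σ (Groupoid.inv σ))⁻¹ : (A f)ˣ)) : A f)) = cpOne A e := by
  rw [cpMul_uElt_uElt, cpOne]
  rw [show (σ ≫ Groupoid.inv σ) = 𝟙 e from Groupoid.comp_inv σ]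
  congr 1
  rw [one_mul, β_inv, ← map_mul]
  simp

end Lemmas3

/-- For an object crossed system `(A, 𝒢, α, β)`, the product of
`A ⋊^α_β 𝒢` is associative and biadditive (so `A ⋊^α_β 𝒢` is a ring); with the grading
`(A ⋊^α_β 𝒢)_σ = A_{r(σ)} u_σ` it is an object unital `𝒢`-graded ring with local
identities `1_{A_e} u_e`; and it is an object crossed product: `β_{σ,σ⁻¹}⁻¹ u_σ` is an
object invertible element of degree `σ` with object inverse `1_{A_{d(σ)}} u_{σ⁻¹}`. -/
theorem stmt5 {𝒢 : Type u} [Groupoid 𝒢] {A : 𝒢 → Type v} [∀ e, Ring (A e)]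
    (S : ObjectCrossedSystem 𝒢 A) :
    -- the product is associative …
    (∀ x y z : CrossedProd 𝒢 A, cpMul S (cpMul S x y) z = cpMul S x (cpMul S y z)) ∧
    -- … and biadditive, so `A ⋊^α_β 𝒢` is a ring
    (∀ x y z : CrossedProd 𝒢 A, cpMul S x (y + z) = cpMul S x y + cpMul S x z) ∧
    (∀ x y z : CrossedProd 𝒢 A, cpMul S (x + y) z = cpMul S x z + cpMul S y z) ∧
    -- the grading: `(A_{r(σ)} u_σ)(A_{r(τ)} u_τ) ⊆ A_{r(στ)} u_{στ}` for composable pairs …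
    (∀ ⦃a b c : 𝒢⦄ (σ : b ⟶ c) (τ : a ⟶ b) (x : A c) (y : A b),
      cpMul S (uElt σ x) (uElt τ y) = uElt (τ ≫ σ) (x * S.α σ y * (S.β σ τ : A c))) ∧
    -- … and `(A_{r(σ)} u_σ)(A_{r(τ)} u_τ) = 0` for non-composable pairs
    (∀ ⦃a b b' c : 𝒢⦄ (σ : b ⟶ c) (τ : a ⟶ b'), b' ≠ b → ∀ (x : A c) (y : A b'),
      cpMul S (uElt σ x) (uElt τ y) = 0) ∧
    -- object unitality with local identities `1_{A_e} u_e`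
    (∀ ⦃e f : 𝒢⦄ (σ : e ⟶ f) (x : A f),
      cpMul S (cpOne A f) (uElt σ x) = uElt σ x ∧ cpMul S (uElt σ x) (cpOne A e) = uElt σ x) ∧
    -- `A ⋊^α_β 𝒢` is an object crossed product: `β_{σ,σ⁻¹}⁻¹ u_σ` is object invertible
    -- with object inverse `1_{A_{d(σ)}} u_{σ⁻¹}`
    (∀ ⦃e f : 𝒢⦄ (σ : e ⟶ f),
      cpMul S (uElt σ ((((S.β σ (Groupoid.inv σ))⁻¹ : (A f)ˣ)) : A f))
        (uElt (Groupoid.inv σ) (1 : A e)) = cpOne A f ∧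
      cpMul S (uElt (Groupoid.inv σ) (1 : A e))
        (uElt σ ((((S.β σ (Groupoid.inv σ))⁻¹ : (A f)ˣ)) : A f)) = cpOne A e) := by
  exact ⟨cpMul_assoc S, cpMul_add_right S, cpMul_add_left S,
    fun a b c σ τ x y => cpMul_uElt_uElt S σ τ x y,
    fun a b b' c σ τ h x y => cpMul_uElt_uElt_ne S σ τ h x y,
    fun e f σ x => ⟨cpOne_mul S σ x, mul_cpOne S σ x⟩,
    fun e f σ => ⟨cp_inv_right S σ, cp_inv_left S σ⟩⟩
end

section
/- Let 𝒢 be a groupoid and let R be an object unital 𝒢-graded ring with 1_{R_e} ≠ 0 for every object e, and suppose R is an object crossed product. Then there exists an object crossed system (A, 𝒢, α, β) with A_e = R_e for every object e, together with a bijective ring homomorphism γ : R → A ⋊^α_β 𝒢 satisfying γ(R_σ) = (A ⋊^α_β 𝒢)_σ for every morphism σ (i.e. every object crossed product is graded isomorphic to a crossed product of an object crossed system). -/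
open CategoryTheory

universe u v

/-- The principal component `R_e = R_{𝟙 e}` of an object unital groupoid graded ring,
as a type. -/
def GradePiece {𝒢 : Type u} [Groupoid 𝒢] {R : Type v} [NonUnitalRing R]
    (g : GroupoidGrading 𝒢 R) (U : ObjectUnital g) (e : 𝒢) : Type v :=
  ↥(g.grade (𝟙 e))

/-- The underlying element of `R` of an element of `R_e`. -/
def GradePiece.val {𝒢 : Type u} [Groupoid 𝒢] {R : Type v} [NonUnitalRing R]
    {g : GroupoidGrading 𝒢 R} {U : ObjectUnital g} {e : 𝒢}
    (x : GradePiece g U e) : R :=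
  Subtype.val (show ↥(g.grade (𝟙 e)) from x)

/-- Each principal component `R_e` of an object unital groupoid graded ring is a unital
ring, with multiplication inherited from `R` and identity `1_{R_e}`. -/
instance GradePiece.instRing {𝒢 : Type u} [Groupoid 𝒢] {R : Type v} [NonUnitalRing R]
    (g : GroupoidGrading 𝒢 R) (U : ObjectUnital g) (e : 𝒢) :
    Ring (GradePiece g U e) :=
  letI ac : AddCommGroup (GradePiece g U e) :=
    (inferInstance : AddCommGroup (g.grade (𝟙 e)))
  letI mul : Mul (GradePiece g U e) :=
    ⟨fun x y => ⟨GradePiece.val x * GradePiece.val y, by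
      have h := g.mul_mem (𝟙 e) (𝟙 e) (GradePiece.val x)
        (show ↥(g.grade (𝟙 e)) from x).2 (GradePiece.val y)
        (show ↥(g.grade (𝟙 e)) from y).2
      simpa using h⟩⟩
  { ac, mul with
    one := show ↥(g.grade (𝟙 e)) from ⟨U.one e, U.one_mem e⟩
    mul_assoc := fun a b c => Subtype.ext (mul_assoc (GradePiece.val a)
      (GradePiece.val b) (GradePiece.val c))
    one_mul := fun a => Subtype.ext (U.one_mul (𝟙 e) (GradePiece.val a)
      (show ↥(g.grade (𝟙 e)) from a).2)
    mul_one := fun a => Subtype.ext (U.mul_one (𝟙 e) (GradePiece.val a)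
      (show ↥(g.grade (𝟙 e)) from a).2)
    left_distrib := fun a b c => Subtype.ext (left_distrib (GradePiece.val a)
      (GradePiece.val b) (GradePiece.val c))
    right_distrib := fun a b c => Subtype.ext (right_distrib (GradePiece.val a)
      (GradePiece.val b) (GradePiece.val c))
    zero_mul := fun a => Subtype.ext (zero_mul (GradePiece.val a))
    mul_zero := fun a => Subtype.ext (mul_zero (GradePiece.val a)) }

section AuxConstruction

variable {𝒢 : Type u} [Groupoid 𝒢] {R : Type v} [NonUnitalRing R]

/-- A system of object invertible elements, normalized at identity morphisms. -/
structure USys (g : GroupoidGrading 𝒢 R) (U : ObjectUnital g) where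
  u : ∀ {e f : 𝒢}, (e ⟶ f) → R
  v : ∀ {e f : 𝒢}, (e ⟶ f) → R
  u_mem : ∀ {e f : 𝒢} (σ : e ⟶ f), u σ ∈ g.grade σ
  v_mem : ∀ {e f : 𝒢} (σ : e ⟶ f), v σ ∈ g.grade (Groupoid.inv σ)
  uv : ∀ {e f : 𝒢} (σ : e ⟶ f), u σ * v σ = U.one f
  vu : ∀ {e f : 𝒢} (σ : e ⟶ f), v σ * u σ = U.one e
  u_id : ∀ e : 𝒢, u (𝟙 e) = U.one e
  v_id : ∀ e : 𝒢, v (𝟙 e) = U.one e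

variable {g : GroupoidGrading 𝒢 R} {U : ObjectUnital g}

lemma exists_usys (hcp : ∀ ⦃e f : 𝒢⦄ (σ : e ⟶ f), ∃ r ∈ g.grade σ,
      ∃ s ∈ g.grade (Groupoid.inv σ), r * s = U.one f ∧ s * r = U.one e) :
    Nonempty (USys g U) := by
  classical
  have H : ∀ {e f : 𝒢} (σ : e ⟶ f), ∃ p : R × R, p.1 ∈ g.grade σ ∧
      p.2 ∈ g.grade (Groupoid.inv σ) ∧ p.1 * p.2 = U.one f ∧ p.2 * p.1 = U.one e ∧
      (∀ (he : e = f), σ = eqToHom he → p.1 = U.one e ∧ p.2 = U.one e) := by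
    intro e f σ
    by_cases hid : ∃ he : e = f, σ = eqToHom he
    · obtain ⟨he, hσ⟩ := hid
      subst he
      rw [eqToHom_refl] at hσ
      subst hσ
      refine ⟨(U.one e, U.one e), U.one_mem e, ?_, ?_, ?_, fun _ _ => ⟨rfl, rfl⟩⟩
      · have h : Groupoid.inv (𝟙 e) = 𝟙 e := by
          rw [Groupoid.inv_eq_inv]; simp
        rw [h]; exact U.one_mem e
      · exact U.mul_one (𝟙 e) _ (U.one_mem e)
      · exact U.mul_one (𝟙 e) _ (U.one_mem e)
    · obtain ⟨r, hr, s, hs, h1, h2⟩ := hcp σ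
      exact ⟨(r, s), hr, hs, h1, h2, fun he hσ => absurd ⟨he, hσ⟩ hid⟩
  exact ⟨{
    u := fun {e f} σ => (Classical.choose (H σ)).1
    v := fun {e f} σ => (Classical.choose (H σ)).2
    u_mem := fun σ => (Classical.choose_spec (H σ)).1
    v_mem := fun σ => (Classical.choose_spec (H σ)).2.1
    uv := fun σ => (Classical.choose_spec (H σ)).2.2.1
    vu := fun σ => (Classical.choose_spec (H σ)).2.2.2.1
    u_id := fun e => ((Classical.choose_spec (H (𝟙 e))).2.2.2.2 rfl (by simp)).1
    v_id := fun e => ((Classical.choose_spec (H (𝟙 e))).2.2.2.2 rfl (by simp)).2 }⟩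

lemma gmul_mem {a b c : 𝒢} {σ : b ⟶ c} {τ : a ⟶ b} {x y : R}
    (hx : x ∈ g.grade σ) (hy : y ∈ g.grade τ) {ρ : a ⟶ c} (h : τ ≫ σ = ρ) :
    x * y ∈ g.grade ρ := h ▸ g.mul_mem σ τ x hx y hy

/-- Constructor for `GradePiece`. -/
def gp (U : ObjectUnital g) {e : 𝒢} (x : R) (hx : x ∈ g.grade (𝟙 e)) :
    GradePiece g U e := show ↥(g.grade (𝟙 e)) from ⟨x, hx⟩

lemma gp_val {e : 𝒢} (x : R) (hx : x ∈ g.grade (𝟙 e)) :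
    GradePiece.val (gp U x hx) = x := rfl

lemma val_mem {e : 𝒢} (a : GradePiece g U e) : a.val ∈ g.grade (𝟙 e) :=
  (show ↥(g.grade (𝟙 e)) from a).2

lemma gpext {e : 𝒢} {a b : GradePiece g U e} (h : a.val = b.val) : a = b :=
  Subtype.ext h

lemma val_mul {e : 𝒢} (a b : GradePiece g U e) :
    (a * b).val = a.val * b.val := rfl

lemma val_add {e : 𝒢} (a b : GradePiece g U e) :
    (a + b).val = a.val + b.val := rfl

lemma val_one {e : 𝒢} : (1 : GradePiece g U e).val = U.one e := rfl

lemma val_zero {e : 𝒢} : (0 : GradePiece g U e).val = 0 := rfl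

namespace USys

variable (W : USys g U)

lemma cancel_vu {e f : 𝒢} (σ : e ⟶ f) {t : R} (ht : t * U.one e = t) :
    t * W.v σ * W.u σ = t := by rw [mul_assoc, W.vu, ht]

lemma cancel_uv {e f : 𝒢} (σ : e ⟶ f) {t : R} (ht : t * U.one f = t) :
    t * W.u σ * W.v σ = t := by rw [mul_assoc, W.uv, ht]

/-- The weak action. -/
def Wα {e f : 𝒢} (σ : e ⟶ f) : GradePiece g U e ≃+* GradePiece g U f where
  toFun a := gp U (W.u σ * a.val * W.v σ)
    (gmul_mem (gmul_mem (W.u_mem σ) (val_mem a) (Category.id_comp σ))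
      (W.v_mem σ) (Groupoid.inv_comp σ))
  invFun a := gp U (W.v σ * a.val * W.u σ)
    (gmul_mem (gmul_mem (W.v_mem σ) (val_mem a) (Category.id_comp _))
      (W.u_mem σ) (Groupoid.comp_inv σ))
  left_inv a := gpext (by
    show W.v σ * (W.u σ * a.val * W.v σ) * W.u σ = a.val
    simp only [← mul_assoc]
    rw [W.vu σ, U.one_mul (𝟙 _) a.val (val_mem a)]
    exact W.cancel_vu σ (U.mul_one (𝟙 _) a.val (val_mem a)))
  right_inv a := gpext (by
    show W.u σ * (W.v σ * a.val * W.u σ) * W.v σ = a.val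
    simp only [← mul_assoc]
    rw [W.uv σ, U.one_mul (𝟙 _) a.val (val_mem a)]
    exact W.cancel_uv σ (U.mul_one (𝟙 _) a.val (val_mem a)))
  map_mul' a b := gpext (by
    show W.u σ * (a.val * b.val) * W.v σ
      = (W.u σ * a.val * W.v σ) * (W.u σ * b.val * W.v σ)
    simp only [← mul_assoc]
    rw [W.cancel_vu σ (U.mul_one σ _
      (gmul_mem (W.u_mem σ) (val_mem a) (Category.id_comp σ)))])
  map_add' a b := gpext (by
    show W.u σ * (a.val + b.val) * W.v σ
      = W.u σ * a.val * W.v σ + W.u σ * b.val * W.v σ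
    rw [mul_add, add_mul])

/-- The cocycle. -/
def Wβ {a b c : 𝒢} (σ : b ⟶ c) (τ : a ⟶ b) : (GradePiece g U c)ˣ where
  val := gp U (W.u σ * W.u τ * W.v (τ ≫ σ))
    (gmul_mem (gmul_mem (W.u_mem σ) (W.u_mem τ) rfl)
      (W.v_mem (τ ≫ σ)) (Groupoid.inv_comp _))
  inv := gp U (W.u (τ ≫ σ) * W.v τ * W.v σ)
    (gmul_mem (gmul_mem (W.u_mem (τ ≫ σ)) (W.v_mem τ)
        (by rw [← Category.assoc, Groupoid.inv_comp, Category.id_comp]))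
      (W.v_mem σ) (Groupoid.inv_comp σ))
  val_inv := gpext (by
    show (W.u σ * W.u τ * W.v (τ ≫ σ)) * (W.u (τ ≫ σ) * W.v τ * W.v σ) = U.one c
    simp only [← mul_assoc]
    rw [W.cancel_vu (τ ≫ σ) (U.mul_one (τ ≫ σ) _
      (gmul_mem (W.u_mem σ) (W.u_mem τ) rfl))]
    rw [W.cancel_uv τ (U.mul_one σ _ (W.u_mem σ))]
    exact W.uv σ)
  inv_val := gpext (by
    show (W.u (τ ≫ σ) * W.v τ * W.v σ) * (W.u σ * W.u τ * W.v (τ ≫ σ)) = U.one c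
    simp only [← mul_assoc]
    rw [W.cancel_vu σ (U.mul_one σ _
      (gmul_mem (W.u_mem (τ ≫ σ)) (W.v_mem τ)
        (by rw [← Category.assoc, Groupoid.inv_comp, Category.id_comp])))]
    rw [W.cancel_vu τ (U.mul_one (τ ≫ σ) _ (W.u_mem (τ ≫ σ)))]
    exact W.uv (τ ≫ σ))

/-- The object crossed system. -/
def Wsys (hne : ∀ e : 𝒢, U.one e ≠ 0) :
    ObjectCrossedSystem 𝒢 (GradePiece g U) where
  nontriv e h := hne e (by
    have h2 := congrArg GradePiece.val h
    rw [val_zero, val_one] at h2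
    exact h2.symm)
  α := fun {e f} σ => W.Wα σ
  α_id e := RingEquiv.ext fun a => gpext (by
    show W.u (𝟙 e) * a.val * W.v (𝟙 e) = a.val
    rw [W.u_id, W.v_id, U.one_mul (𝟙 e) a.val (val_mem a),
      U.mul_one (𝟙 e) a.val (val_mem a)])
  β := fun {a b c} σ τ => W.Wβ σ τ
  β_id_right := fun {b c} σ => Units.ext (gpext (by
    show W.u σ * W.u (𝟙 b) * W.v (𝟙 b ≫ σ) = U.one c
    rw [Category.id_comp, W.u_id, U.mul_one σ _ (W.u_mem σ)]
    exact W.uv σ))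
  β_id_left := fun {b c} σ => Units.ext (gpext (by
    show W.u (𝟙 c) * W.u σ * W.v (σ ≫ 𝟙 c) = U.one c
    rw [Category.comp_id, W.u_id, U.one_mul σ _ (W.u_mem σ)]
    exact W.uv σ))
  α_α := fun {a b c} σ τ x => gpext (by
    show W.u σ * (W.u τ * x.val * W.v τ) * W.v σ =
      (W.u σ * W.u τ * W.v (τ ≫ σ)) * (W.u (τ ≫ σ) * x.val * W.v (τ ≫ σ))
        * (W.u (τ ≫ σ) * W.v τ * W.v σ)
    simp only [← mul_assoc]
    rw [W.cancel_vu (τ ≫ σ) (U.mul_one (τ ≫ σ) _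
      (gmul_mem (W.u_mem σ) (W.u_mem τ) rfl))]
    rw [W.cancel_vu (τ ≫ σ) (U.mul_one (τ ≫ σ) _
      (gmul_mem (gmul_mem (W.u_mem σ) (W.u_mem τ) rfl) (val_mem x)
        (Category.id_comp _)))])
  cocycle := fun {a b c d} σ τ ρ => gpext (by
    show (W.u σ * W.u τ * W.v (τ ≫ σ)) * (W.u (τ ≫ σ) * W.u ρ * W.v (ρ ≫ τ ≫ σ)) =
      (W.u σ * (W.u τ * W.u ρ * W.v (ρ ≫ τ)) * W.v σ)
        * (W.u σ * W.u (ρ ≫ τ) * W.v ((ρ ≫ τ) ≫ σ))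
    simp only [← mul_assoc]
    rw [W.cancel_vu (τ ≫ σ) (U.mul_one (τ ≫ σ) _
      (gmul_mem (W.u_mem σ) (W.u_mem τ) rfl))]
    rw [W.cancel_vu σ (U.mul_one σ _
      (gmul_mem (gmul_mem (gmul_mem (W.u_mem σ) (W.u_mem τ) rfl) (W.u_mem ρ) rfl)
        (W.v_mem (ρ ≫ τ))
        (by rw [← Category.assoc ρ τ σ, ← Category.assoc, Groupoid.inv_comp,
              Category.id_comp])))]
    rw [W.cancel_vu (ρ ≫ τ) (U.mul_one (ρ ≫ τ ≫ σ) _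
      (gmul_mem (gmul_mem (W.u_mem σ) (W.u_mem τ) rfl) (W.u_mem ρ) rfl))]
    rw [Category.assoc])

/-- Each component of the inverse isomorphism. -/
def comp (σ : Mor 𝒢) : GradePiece g U σ.2.1 →+ R where
  toFun a := a.val * W.u σ.2.2
  map_zero' := by
    show (0 : GradePiece g U σ.2.1).val * W.u σ.2.2 = 0
    rw [val_zero, zero_mul]
  map_add' a b := by
    show (a + b).val * W.u σ.2.2 = a.val * W.u σ.2.2 + b.val * W.u σ.2.2
    rw [val_add, add_mul]

open Classical in
/-- The isomorphism from the crossed product onto `R`. -/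
noncomputable def δ : CrossedProd 𝒢 (GradePiece g U) →+ R :=
  DFinsupp.sumAddHom W.comp

open Classical in
lemma δ_single {e f : 𝒢} (σ : e ⟶ f) (a : GradePiece g U f) :
    W.δ (uElt σ a) = a.val * W.u σ :=
  DFinsupp.sumAddHom_single _ _ _

open Classical in
lemma δ_apply (x : CrossedProd 𝒢 (GradePiece g U)) :
    W.δ x = ∑ σ ∈ x.support, (x σ).val * W.u σ.2.2 := by
  rw [δ, DFinsupp.sumAddHom_apply]; rfl

open Classical in
lemma δ_inj : Function.Injective W.δ := by
  rw [injective_iff_map_eq_zero]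
  intro x hx
  have hmem : ∀ σ : Mor 𝒢, (x σ).val * W.u σ.2.2 ∈ g.grade σ.2.2 :=
    fun σ => gmul_mem (val_mem _) (W.u_mem σ.2.2) (Category.comp_id _)
  have h0 := g.indep x.support (fun σ => (x σ).val * W.u σ.2.2) hmem
    (by rw [← W.δ_apply x, hx])
  ext σ
  rw [DFinsupp.zero_apply]
  by_cases hσ : σ ∈ x.support
  · have h1 : (x σ).val * W.u σ.2.2 = 0 := h0 σ hσ
    have h3 := congrArg (fun t => t * W.v σ.2.2) h1
    simp only [zero_mul] at h3
    rw [mul_assoc, W.uv, U.mul_one (𝟙 σ.2.1) _ (val_mem _)] at h3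
    exact Subtype.ext h3
  · exact DFinsupp.notMem_support_iff.mp hσ

open Classical in
lemma δ_surj : Function.Surjective W.δ := by
  intro r
  obtain ⟨s, c, hc, rfl⟩ := g.decompose r
  refine ⟨∑ σ ∈ s, uElt σ.2.2 (gp U (c σ * W.v σ.2.2)
    (gmul_mem (hc σ) (W.v_mem σ.2.2) (Groupoid.inv_comp _))), ?_⟩
  rw [map_sum]
  refine Finset.sum_congr rfl fun σ _ => ?_
  rw [W.δ_single, gp_val]
  exact W.cancel_vu σ.2.2 (U.mul_one σ.2.2 _ (hc σ))

lemma key_pos {e f e' : 𝒢} (s : e ⟶ f) (t : e' ⟶ e)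
    (a : GradePiece g U f) (b : GradePiece g U e) :
    (a * (W.Wα s) b * ((W.Wβ s t : (GradePiece g U f)ˣ) : GradePiece g U f)).val
        * W.u (t ≫ s)
      = (a.val * W.u s) * (b.val * W.u t) := by
  show (a.val * (W.u s * b.val * W.v s) * (W.u s * W.u t * W.v (t ≫ s)))
      * W.u (t ≫ s) = _
  have m1 : a.val * W.u s ∈ g.grade s :=
    gmul_mem (val_mem a) (W.u_mem s) (Category.comp_id s)
  have m2 : a.val * W.u s * b.val ∈ g.grade s :=
    gmul_mem m1 (val_mem b) (Category.id_comp s)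
  have m5 : a.val * W.u s * b.val * W.v s * W.u s * W.u t ∈ g.grade (t ≫ s) :=
    gmul_mem (gmul_mem (gmul_mem m2 (W.v_mem s) (Groupoid.inv_comp s))
      (W.u_mem s) (Category.comp_id s)) (W.u_mem t) rfl
  simp only [← mul_assoc]
  rw [W.cancel_vu (t ≫ s) (U.mul_one (t ≫ s) _ m5)]
  rw [W.cancel_vu s (U.mul_one s _ m2)]

lemma key_neg {e f e' f' : 𝒢} (s : e ⟶ f) (t : e' ⟶ f') (h : f' ≠ e)
    (a : GradePiece g U f) (b : GradePiece g U f') :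
    (a.val * W.u s) * (b.val * W.u t) = 0 := by
  have h0 : W.u s * b.val = 0 :=
    g.mul_eq_zero s (𝟙 f') h (W.u s) (W.u_mem s) b.val (val_mem b)
  calc (a.val * W.u s) * (b.val * W.u t)
      = a.val * (W.u s * b.val) * W.u t := by simp only [mul_assoc]
    _ = 0 := by rw [h0, mul_zero, zero_mul]

open Classical in
lemma δ_mul (hne : ∀ e : 𝒢, U.one e ≠ 0) (x y : CrossedProd 𝒢 (GradePiece g U)) :
    W.δ (cpMul (W.Wsys hne) x y) = W.δ x * W.δ y := by
  unfold cpMul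
  rw [DFinsupp.sum, map_sum, W.δ_apply, W.δ_apply, Finset.sum_mul_sum]
  refine Finset.sum_congr rfl fun σ hσ => ?_
  rw [DFinsupp.sum, map_sum]
  refine Finset.sum_congr rfl fun τ hτ => ?_
  obtain ⟨e, f, s⟩ := σ
  obtain ⟨e', f', t⟩ := τ
  by_cases h : f' = e
  · subst h
    rw [dif_pos rfl, cast_eq]
    simp only [eqToHom_refl, Category.comp_id]
    rw [W.δ_single]
    exact W.key_pos s t _ _
  · rw [dif_neg h, map_zero]
    exact (W.key_neg s t h _ _).symm

end USys

end AuxConstruction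

/-- Every object crossed product — i.e. every object unital `𝒢`-graded
ring `R` (with nonzero local identities) such that every `R_σ` contains an object
invertible element — is graded isomorphic to the crossed product of an object crossed
system `(A, 𝒢, α, β)` with `A_e = R_e` for every object `e`. -/
theorem stmt6 {𝒢 : Type u} [Groupoid 𝒢] {R : Type v} [NonUnitalRing R]
    (g : GroupoidGrading 𝒢 R) (U : ObjectUnital g) (hne : ∀ e : 𝒢, U.one e ≠ 0)
    (hcp : ∀ ⦃e f : 𝒢⦄ (σ : e ⟶ f), ∃ r ∈ g.grade σ,
      ∃ s ∈ g.grade (Groupoid.inv σ), r * s = U.one f ∧ s * r = U.one e) :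
    ∃ (S : ObjectCrossedSystem 𝒢 (GradePiece g U))
      (γ : R → CrossedProd 𝒢 (GradePiece g U)),
      Function.Bijective γ ∧
      (∀ x y : R, γ (x + y) = γ x + γ y) ∧
      (∀ x y : R, γ (x * y) = cpMul S (γ x) (γ y)) ∧
      (∀ σ : Mor 𝒢, γ '' (g.grade σ.2.2) =
        Set.range (fun a : GradePiece g U σ.2.1 => uElt σ.2.2 a)) := by
  obtain ⟨W⟩ := exists_usys hcp
  have hbij : Function.Bijective W.δ := ⟨W.δ_inj, W.δ_surj⟩
  let E := Equiv.ofBijective W.δ hbij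
  have hE : ∀ r : R, W.δ (E.symm r) = r := fun r => E.apply_symm_apply r
  refine ⟨W.Wsys hne, fun r => E.symm r, E.symm.bijective, ?_, ?_, ?_⟩
  · intro x y
    apply hbij.1
    rw [map_add, hE, hE, hE]
  · intro x y
    apply hbij.1
    rw [W.δ_mul hne, hE, hE, hE]
  · intro σ
    ext z
    constructor
    · rintro ⟨r, hr, rfl⟩
      refine ⟨gp U (r * W.v σ.2.2) (gmul_mem hr (W.v_mem _) (Groupoid.inv_comp _)), ?_⟩
      apply hbij.1
      rw [hE, W.δ_single, gp_val]
      exact W.cancel_vu _ (U.mul_one σ.2.2 _ hr)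
    · rintro ⟨a, rfl⟩
      refine ⟨a.val * W.u σ.2.2,
        gmul_mem (val_mem a) (W.u_mem _) (Category.comp_id _), ?_⟩
      apply hbij.1
      rw [hE, W.δ_single]
end

section
/- Let (A, 𝒢, α, β) be an object crossed system. The ring A ⋊^α_β 𝒢 is unital if and only if the set 𝒢₀ of objects of 𝒢 is finite; in that case its multiplicative identity is Σ_{e∈𝒢₀} 1_{A_e} u_e. -/
open CategoryTheory

universe u v

/-!
The product is biadditive, so it is determined by its values on homogeneous elements `a u_σ`.
Because `α_e = id` and `β` is normalized, for `σ : e ⟶ f` the element `1 u_f` is a left and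
`1 u_e` a right identity for `a u_σ`, while `1 u_{e'}` annihilates it on the relevant side for
every other object `e'`; hence `∑_e 1 u_e` is the identity when `𝒢₀` is finite. Conversely,
`x (1 u_e) = 0` unless some morphism in the support of `x` has domain `e`, and `1 u_e ≠ 0`
since `A_e` is nonzero; so every object is the domain of a morphism in the finite support of
an identity.
-/

open Classical in
lemma cpOne_ne_zero {𝒢 : Type u} [Groupoid 𝒢] {A : 𝒢 → Type v} [∀ e, Ring (A e)] {e : 𝒢}
    (h : (0 : A e) ≠ 1) : cpOne A e ≠ 0 :=
  fun h0 => h (DFinsupp.single_eq_zero.mp h0).symm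

namespace ObjectCrossedSystem

open Classical

variable {𝒢 : Type u} [Groupoid 𝒢] {A : 𝒢 → Type v} [∀ e, Ring (A e)]
  (S : ObjectCrossedSystem 𝒢 A)

noncomputable def mulTerm (σ : Mor 𝒢) (a : A σ.2.1) (τ : Mor 𝒢) (b : A τ.2.1) :
    CrossedProd 𝒢 A :=
  if h : τ.2.1 = σ.1 then
    uElt ((τ.2.2 ≫ eqToHom h) ≫ σ.2.2)
      (a * S.α σ.2.2 (cast (congrArg A h) b) * (S.β σ.2.2 (τ.2.2 ≫ eqToHom h) : A σ.2.1))
  else 0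

lemma cpMul_eq_sum_sum (x y : CrossedProd 𝒢 A) :
    cpMul S x y = x.sum fun σ a => y.sum (S.mulTerm σ a) :=
  rfl

lemma mulTerm_of_ne {σ τ : Mor 𝒢} (h : τ.2.1 ≠ σ.1) (a : A σ.2.1) (b : A τ.2.1) :
    S.mulTerm σ a τ b = 0 :=
  dif_neg h

lemma mulTerm_zero_left (σ τ : Mor 𝒢) (b : A τ.2.1) : S.mulTerm σ 0 τ b = 0 := by
  unfold mulTerm
  split <;> simp [uElt]

lemma mulTerm_zero_right (σ τ : Mor 𝒢) (a : A σ.2.1) : S.mulTerm σ a τ 0 = 0 := by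
  obtain ⟨e', f', τ⟩ := τ
  unfold mulTerm
  split
  next h => dsimp only at h; subst h; simp [uElt]
  next => rfl

lemma mulTerm_add_left (σ τ : Mor 𝒢) (a a' : A σ.2.1) (b : A τ.2.1) :
    S.mulTerm σ (a + a') τ b = S.mulTerm σ a τ b + S.mulTerm σ a' τ b := by
  unfold mulTerm
  split <;> simp [uElt, add_mul]

lemma mulTerm_add_right (σ τ : Mor 𝒢) (a : A σ.2.1) (b b' : A τ.2.1) :
    S.mulTerm σ a τ (b + b') = S.mulTerm σ a τ b + S.mulTerm σ a τ b' := by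
  obtain ⟨e', f', τ⟩ := τ
  unfold mulTerm
  split
  next h => dsimp only at h; subst h; simp [uElt, mul_add, add_mul]
  next => simp

lemma cpMul_add_left (x x' y : CrossedProd 𝒢 A) :
    cpMul S (x + x') y = cpMul S x y + cpMul S x' y := by
  simp only [cpMul_eq_sum_sum]
  refine DFinsupp.sum_add_index (fun σ => ?_) fun σ a a' => ?_
  · exact Finset.sum_eq_zero fun τ _ => S.mulTerm_zero_left σ τ _
  · rw [← DFinsupp.sum_add]
    exact Finset.sum_congr rfl fun τ _ => S.mulTerm_add_left σ τ a a' _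

lemma cpMul_add_right (x y y' : CrossedProd 𝒢 A) :
    cpMul S x (y + y') = cpMul S x y + cpMul S x y' := by
  simp only [cpMul_eq_sum_sum, ← DFinsupp.sum_add]
  refine Finset.sum_congr rfl fun σ _ => ?_
  exact DFinsupp.sum_add_index (S.mulTerm_zero_right σ · _) (S.mulTerm_add_right σ · _)

noncomputable def mulLeft (x : CrossedProd 𝒢 A) : CrossedProd 𝒢 A →+ CrossedProd 𝒢 A :=
  AddMonoidHom.mk' (cpMul S x) (S.cpMul_add_right x)

noncomputable def mulRight (y : CrossedProd 𝒢 A) : CrossedProd 𝒢 A →+ CrossedProd 𝒢 A :=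
  AddMonoidHom.mk' (cpMul S · y) (S.cpMul_add_left · · y)

lemma cpMul_uElt_right (x : CrossedProd 𝒢 A) {e f : 𝒢} (τ : e ⟶ f) (b : A f) :
    cpMul S x (uElt τ b) = x.sum fun σ a => S.mulTerm σ a ⟨e, f, τ⟩ b :=
  Finset.sum_congr rfl fun σ _ => DFinsupp.sum_single_index (S.mulTerm_zero_right σ _ _)

lemma uElt_mul_uElt {e f e' f' : 𝒢} (σ : e ⟶ f) (τ : e' ⟶ f') (a : A f) (b : A f') :
    cpMul S (uElt σ a) (uElt τ b) = S.mulTerm ⟨e, f, σ⟩ a ⟨e', f', τ⟩ b := by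
  rw [cpMul_uElt_right]
  exact DFinsupp.sum_single_index (S.mulTerm_zero_left _ _ _)

lemma uElt_mul_uElt_of_ne {e f e' f' : 𝒢} (σ : e ⟶ f) (τ : e' ⟶ f') (h : f' ≠ e)
    (a : A f) (b : A f') : cpMul S (uElt σ a) (uElt τ b) = 0 :=
  (S.uElt_mul_uElt σ τ a b).trans <|
    S.mulTerm_of_ne (σ := ⟨e, f, σ⟩) (τ := ⟨e', f', τ⟩) h a b

lemma cpOne_mul_uElt {e f : 𝒢} (σ : e ⟶ f) (b : A f) :
    cpMul S (cpOne A f) (uElt σ b) = uElt σ b := by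
  rw [cpOne, uElt_mul_uElt, mulTerm, dif_pos rfl]
  simp [S.α_id, S.β_id_left]

lemma uElt_mul_cpOne {e f : 𝒢} (σ : e ⟶ f) (a : A f) :
    cpMul S (uElt σ a) (cpOne A e) = uElt σ a := by
  rw [cpOne, uElt_mul_uElt, mulTerm, dif_pos rfl]
  simp [S.β_id_right]

lemma sum_cpOne_mul [Fintype 𝒢] (x : CrossedProd 𝒢 A) :
    cpMul S (∑ e : 𝒢, cpOne A e) x = x := by
  suffices S.mulLeft (∑ e : 𝒢, cpOne A e) = AddMonoidHom.id _ from DFunLike.congr_fun this x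
  refine DFinsupp.addHom_ext fun ⟨e, f, σ⟩ b => ?_
  change S.mulRight (uElt σ b) (∑ e : 𝒢, cpOne A e) = uElt σ b
  rw [map_sum, Finset.sum_eq_single_of_mem f (Finset.mem_univ f)]
  · exact S.cpOne_mul_uElt σ b
  · exact fun e' _ hne => S.uElt_mul_uElt_of_ne _ _ (Ne.symm hne) _ _

lemma mul_sum_cpOne [Fintype 𝒢] (x : CrossedProd 𝒢 A) :
    cpMul S x (∑ e : 𝒢, cpOne A e) = x := by
  suffices S.mulRight (∑ e : 𝒢, cpOne A e) = AddMonoidHom.id _ from DFunLike.congr_fun this x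
  refine DFinsupp.addHom_ext fun ⟨e, f, σ⟩ a => ?_
  change S.mulLeft (uElt σ a) (∑ e : 𝒢, cpOne A e) = uElt σ a
  rw [map_sum, Finset.sum_eq_single_of_mem e (Finset.mem_univ e)]
  · exact S.uElt_mul_cpOne σ a
  · exact fun e' _ hne => S.uElt_mul_uElt_of_ne _ _ hne _ _

lemma exists_mem_support_fst_eq {o : CrossedProd 𝒢 A} {e : 𝒢}
    (ho : cpMul S o (cpOne A e) = cpOne A e) : ∃ σ ∈ o.support, σ.1 = e := by
  by_contra! h
  refine cpOne_ne_zero (S.nontriv e) ?_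
  rw [← ho, cpOne, cpMul_uElt_right, DFinsupp.sum]
  exact Finset.sum_eq_zero fun σ hσ => S.mulTerm_of_ne (h σ hσ).symm _ _

lemma finite_of_forall_cpMul_eq {o : CrossedProd 𝒢 A} (ho : ∀ x, cpMul S o x = x) :
    Finite 𝒢 := by
  refine Finite.of_surjective (fun σ : o.support => σ.1.1) fun e => ?_
  obtain ⟨σ, hσ, rfl⟩ := S.exists_mem_support_fst_eq (ho (cpOne A e))
  exact ⟨⟨σ, hσ⟩, rfl⟩

end ObjectCrossedSystem

/-- The crossed product `A ⋊^α_β 𝒢` of an object crossed system is a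
unital ring iff the set of objects of `𝒢` is finite; in that case its multiplicative
identity is `∑_{e ∈ 𝒢₀} 1_{A_e} u_e`. -/
theorem stmt8 {𝒢 : Type u} [Groupoid 𝒢] {A : 𝒢 → Type v} [∀ e, Ring (A e)]
    (S : ObjectCrossedSystem 𝒢 A) :
    ((∃ o : CrossedProd 𝒢 A, ∀ x : CrossedProd 𝒢 A, cpMul S o x = x ∧ cpMul S x o = x) ↔
      Finite 𝒢) ∧
    (∀ _ : Fintype 𝒢, ∀ x : CrossedProd 𝒢 A,
      cpMul S (∑ e : 𝒢, cpOne A e) x = x ∧ cpMul S x (∑ e : 𝒢, cpOne A e) = x) := by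
  refine ⟨⟨fun ⟨_, ho⟩ => S.finite_of_forall_cpMul_eq fun x => (ho x).1, fun _ => ?_⟩,
    fun _ x => ⟨S.sum_cpOne_mul x, S.mul_sum_cpOne x⟩⟩
  have := Fintype.ofFinite 𝒢
  exact ⟨_, fun x => ⟨S.sum_cpOne_mul x, S.mul_sum_cpOne x⟩⟩
end

section
/- Let 𝒢 be a groupoid and let R be an object unital strongly 𝒢-graded ring, with the maps γ_σ defined from a fixed choice of elements u_σ^{(i)}, v_{σ⁻¹}^{(i)}. If σ is a morphism and r ∈ Z(R_0), then γ_σ(r) does not depend on the choice of the elements u_σ^{(i)} and v_{σ⁻¹}^{(i)}: for any m ∈ ℕ and any s^{(1)},…,s^{(m)} ∈ R_σ, t^{(1)},…,t^{(m)} ∈ R_{σ⁻¹} with Σ_{j=1}^{m} s^{(j)} t^{(j)} = 1_{R_{r(σ)}}, one has Σ_{j=1}^{m} s^{(j)} r t^{(j)} = γ_σ(r). -/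
open CategoryTheory

universe u v

/-- The principal component `R_0 = ⊕_{e ∈ 𝒢₀} R_e` of a groupoid graded ring. -/
def R0 {𝒢 : Type u} [Groupoid 𝒢] {R : Type v} [NonUnitalRing R]
    (g : GroupoidGrading 𝒢 R) : AddSubgroup R :=
  ⨆ e : 𝒢, g.grade (𝟙 e)

/-- Membership in the center `Z(R_0)` of the principal component `R_0`. -/
def memZR0 {𝒢 : Type u} [Groupoid 𝒢] {R : Type v} [NonUnitalRing R]
    (g : GroupoidGrading 𝒢 R) (r : R) : Prop :=
  r ∈ R0 g ∧ ∀ x ∈ R0 g, r * x = x * r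

/-- Membership in the center `Z(R_e)` of the principal component `R_e`. -/
def memZRe {𝒢 : Type u} [Groupoid 𝒢] {R : Type v} [NonUnitalRing R]
    (g : GroupoidGrading 𝒢 R) (e : 𝒢) (r : R) : Prop :=
  r ∈ g.grade (𝟙 e) ∧ ∀ x ∈ g.grade (𝟙 e), r * x = x * r

/-- A fixed choice, for every morphism `σ`, of `n_σ ∈ ℕ` and elements
`u_σ^{(i)} ∈ R_σ`, `v_{σ⁻¹}^{(i)} ∈ R_{σ⁻¹}` (for `0 ≤ i < n_σ`) with
`∑ u_σ^{(i)} v_{σ⁻¹}^{(i)} = 1_{R_{r(σ)}}`, normalized at identity morphisms by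
`n_{𝟙 e} = 1` and `u_{𝟙 e}^{(0)} = v_{𝟙 e}^{(0)} = 1_{R_e}`. Such a choice exists
precisely because `R` is object unital and strongly `𝒢`-graded. -/
structure StrongChoice {𝒢 : Type u} [Groupoid 𝒢] {R : Type v} [NonUnitalRing R]
    (g : GroupoidGrading 𝒢 R) (U : ObjectUnital g) where
  n : ∀ ⦃e f : 𝒢⦄, (e ⟶ f) → ℕ
  uu : ∀ ⦃e f : 𝒢⦄, (e ⟶ f) → ℕ → R
  vv : ∀ ⦃e f : 𝒢⦄, (e ⟶ f) → ℕ → R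
  uu_mem : ∀ ⦃e f : 𝒢⦄ (σ : e ⟶ f) (i : ℕ), uu σ i ∈ g.grade σ
  vv_mem : ∀ ⦃e f : 𝒢⦄ (σ : e ⟶ f) (i : ℕ), vv σ i ∈ g.grade (Groupoid.inv σ)
  sum_eq : ∀ ⦃e f : 𝒢⦄ (σ : e ⟶ f),
    ∑ i ∈ Finset.range (n σ), uu σ i * vv σ i = U.one f
  n_id : ∀ e : 𝒢, n (𝟙 e) = 1
  uu_id : ∀ e : 𝒢, uu (𝟙 e) 0 = U.one e
  vv_id : ∀ e : 𝒢, vv (𝟙 e) 0 = U.one e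

/-- The additive map `γ_σ : R → R`, `γ_σ(r) = ∑_i u_σ^{(i)} r v_{σ⁻¹}^{(i)}`. -/
def StrongChoice.gam {𝒢 : Type u} [Groupoid 𝒢] {R : Type v} [NonUnitalRing R]
    {g : GroupoidGrading 𝒢 R} {U : ObjectUnital g} (C : StrongChoice g U)
    ⦃e f : 𝒢⦄ (σ : e ⟶ f) (r : R) : R :=
  ∑ i ∈ Finset.range (C.n σ), C.uu σ i * r * C.vv σ i

/-- For `r ∈ Z(R_0)`, the value `γ_σ(r)` does not depend on the choice
of the elements `u_σ^{(i)}`, `v_{σ⁻¹}^{(i)}`: any elements `s^{(j)} ∈ R_σ`,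
`t^{(j)} ∈ R_{σ⁻¹}` with `∑_j s^{(j)} t^{(j)} = 1_{R_{r(σ)}}` satisfy
`∑_j s^{(j)} r t^{(j)} = γ_σ(r)`. -/
theorem stmt14 {𝒢 : Type u} [Groupoid 𝒢] {R : Type v} [NonUnitalRing R]
    (g : GroupoidGrading 𝒢 R) (U : ObjectUnital g) (C : StrongChoice g U)
    ⦃e f : 𝒢⦄ (σ : e ⟶ f) (r : R) (hr : memZR0 g r)
    (m : ℕ) (ss tt : ℕ → R)
    (hss : ∀ j : ℕ, ss j ∈ g.grade σ)
    (htt : ∀ j : ℕ, tt j ∈ g.grade (Groupoid.inv σ))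
    (hone : ∑ j ∈ Finset.range m, ss j * tt j = U.one f) :
    ∑ j ∈ Finset.range m, ss j * r * tt j = C.gam σ r := by
  have key : ∀ j i, ss j * r * tt j * (C.uu σ i * C.vv σ i)
      = ss j * tt j * (C.uu σ i * r * C.vv σ i) := by
    intro j i
    have hmem : tt j * C.uu σ i ∈ g.grade (𝟙 e) := by
      have := g.mul_mem (Groupoid.inv σ) σ _ (htt j) _ (C.uu_mem σ i)
      simpa [Groupoid.comp_inv] using this
    have hR0 : tt j * C.uu σ i ∈ R0 g := AddSubgroup.mem_iSup_of_mem e hmem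
    have hcomm := hr.2 _ hR0
    have h1 : ss j * r * tt j * (C.uu σ i * C.vv σ i)
        = ss j * ((r * (tt j * C.uu σ i)) * C.vv σ i) := by
      simp [mul_assoc]
    rw [h1, hcomm]
    simp [mul_assoc]
  calc ∑ j ∈ Finset.range m, ss j * r * tt j
      = ∑ j ∈ Finset.range m, ss j * r * tt j * U.one f := by
        refine Finset.sum_congr rfl fun j _ => ?_
        rw [mul_assoc (ss j * r) (tt j), U.mul_one (Groupoid.inv σ) _ (htt j)]
    _ = ∑ j ∈ Finset.range m, ∑ i ∈ Finset.range (C.n σ),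
          ss j * r * tt j * (C.uu σ i * C.vv σ i) := by
        refine Finset.sum_congr rfl fun j _ => ?_
        rw [← Finset.mul_sum, C.sum_eq σ]
    _ = ∑ i ∈ Finset.range (C.n σ), ∑ j ∈ Finset.range m,
          ss j * tt j * (C.uu σ i * r * C.vv σ i) := by
        rw [Finset.sum_comm]
        exact Finset.sum_congr rfl fun i _ => Finset.sum_congr rfl fun j _ => key j i
    _ = ∑ i ∈ Finset.range (C.n σ), U.one f * (C.uu σ i * r * C.vv σ i) := by
        refine Finset.sum_congr rfl fun i _ => ?_
        rw [← Finset.sum_mul, hone]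
    _ = C.gam σ r := by
        refine Finset.sum_congr rfl fun i _ => ?_
        rw [← mul_assoc, ← mul_assoc, U.one_mul σ _ (C.uu_mem σ i)]
end

section
/- Let 𝒢 be a groupoid and let R be an object unital strongly 𝒢-graded ring, with the maps γ_σ defined from a fixed choice of elements u_σ^{(i)}, v_{σ⁻¹}^{(i)}. For all morphisms σ, τ and every r ∈ Z(R_0): (a) if (σ,τ) is not composable, then γ_σ(γ_τ(r)) = 0; (b) if (σ,τ) is composable, then γ_σ(γ_τ(r)) = γ_{στ}(r_{d(τ)}) 1_{R_{r(σ)}}, where r_{d(τ)} denotes the R_{d(τ)}-component of r. -/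
open CategoryTheory

universe u v

/-- For all morphisms `σ, τ` and `r ∈ Z(R_0)`: (a) if `(σ,τ)` is not
composable then `γ_σ(γ_τ(r)) = 0`; (b) if `(σ,τ)` is composable then
`γ_σ(γ_τ(r)) = γ_{στ}(r_{d(τ)}) 1_{R_{r(σ)}}`, where `r_{d(τ)}` is the
`R_{d(τ)}`-component of `r`. -/
theorem stmt15 {𝒢 : Type u} [Groupoid 𝒢] {R : Type v} [NonUnitalRing R]
    (g : GroupoidGrading 𝒢 R) (U : ObjectUnital g) (C : StrongChoice g U) :
    -- (a) non-composable pairs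
    (∀ ⦃a b b' c : 𝒢⦄ (σ : b ⟶ c) (τ : a ⟶ b'), b' ≠ b →
      ∀ r : R, memZR0 g r → C.gam σ (C.gam τ r) = 0) ∧
    -- (b) composable pairs
    (∀ ⦃a b c : 𝒢⦄ (σ : b ⟶ c) (τ : a ⟶ b),
      ∀ r : R, memZR0 g r →
      ∀ (cc : 𝒢 → R) (s : Finset 𝒢),
        (∀ e' : 𝒢, cc e' ∈ g.grade (𝟙 e')) → (∀ e' ∉ s, cc e' = 0) →
        r = ∑ e' ∈ s, cc e' →
        C.gam σ (C.gam τ r) = C.gam (τ ≫ σ) (cc a) * U.one c) := by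
  constructor
  · -- part (a)
    intro a b b' c σ τ hne r hr
    have hmem : C.gam τ r ∈ g.grade (𝟙 b') := by
      apply AddSubgroup.sum_mem
      intro i _
      have hr0 : r ∈ ⨆ e : 𝒢, g.grade (𝟙 e) := hr.1
      refine AddSubgroup.iSup_induction (C := fun x => C.uu τ i * x * C.vv τ i ∈ g.grade (𝟙 b'))
        _ hr0 ?_ ?_ ?_
      · intro e' x hx
        by_cases he : e' = a
        · subst he
          have h1 : C.uu τ i * x ∈ g.grade (𝟙 e' ≫ τ) :=
            g.mul_mem τ (𝟙 e') _ (C.uu_mem τ i) _ hx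
          have h2 : C.uu τ i * x * C.vv τ i ∈ g.grade (Groupoid.inv τ ≫ 𝟙 e' ≫ τ) :=
            g.mul_mem _ _ _ h1 _ (C.vv_mem τ i)
          simpa using h2
        · have h0 : C.uu τ i * x = 0 :=
            g.mul_eq_zero τ (𝟙 e') he _ (C.uu_mem τ i) _ hx
          rw [h0, zero_mul]
          exact AddSubgroup.zero_mem _
      · simpa using AddSubgroup.zero_mem _
      · intro x y hx hy
        have : C.uu τ i * (x + y) * C.vv τ i
            = C.uu τ i * x * C.vv τ i + C.uu τ i * y * C.vv τ i := by noncomm_ring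
        rw [this]; exact AddSubgroup.add_mem _ hx hy
    show (∑ j ∈ Finset.range (C.n σ), C.uu σ j * C.gam τ r * C.vv σ j) = 0
    apply Finset.sum_eq_zero
    intro j _
    have h0 : C.uu σ j * C.gam τ r = 0 :=
      g.mul_eq_zero σ (𝟙 b') hne _ (C.uu_mem σ j) _ hmem
    rw [h0, zero_mul]
  · -- part (b)
    intro a b c σ τ r hr cc s hmemcc hzero hsum
    set w := cc a with hw
    -- x ∈ R_{ρ'} with source a multiplied by r picks out cc a
    have hxr : ∀ {q : 𝒢} (ρ' : a ⟶ q) (x : R), x ∈ g.grade ρ' → x * r = x * w := by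
      intro q ρ' x hx
      rw [hsum, Finset.mul_sum]
      rw [Finset.sum_eq_single a (fun e' _ hea => g.mul_eq_zero ρ' (𝟙 e') hea _ hx _ (hmemcc e'))
        (fun ha => by rw [hzero a ha, mul_zero])]
    have hrx : ∀ (z : R), z ∈ g.grade (𝟙 a) → r * z = w * z := by
      intro z hz
      rw [hsum, Finset.sum_mul]
      rw [Finset.sum_eq_single a
        (fun e' _ hea => g.mul_eq_zero (𝟙 e') (𝟙 a) (Ne.symm hea) _ (hmemcc e') _ hz)
        (fun ha => by rw [hzero a ha, zero_mul])]
    have hcomm : ∀ (z : R), z ∈ g.grade (𝟙 a) → z * w = w * z := by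
      intro z hz
      have hz0 : z ∈ R0 g := (le_iSup (fun e : 𝒢 => g.grade (𝟙 e)) a) hz
      have h1 : z * r = z * w := hxr (𝟙 a) z hz
      have h2 : r * z = w * z := hrx z hz
      have h3 : r * z = z * r := hr.2 z hz0
      rw [← h1, ← h2, h3]
    set ρ : a ⟶ c := τ ≫ σ with hρ
    -- the double sum A
    set A : R := ∑ j ∈ Finset.range (C.n σ), ∑ i ∈ Finset.range (C.n τ),
      C.uu σ j * C.uu τ i * w * (C.vv τ i * C.vv σ j) with hA
    have step1 : C.gam σ (C.gam τ r) = A := by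
      show (∑ j ∈ Finset.range (C.n σ),
          C.uu σ j * (∑ i ∈ Finset.range (C.n τ), C.uu τ i * r * C.vv τ i) * C.vv σ j) = A
      rw [hA]
      refine Finset.sum_congr rfl fun j _ => ?_
      rw [Finset.mul_sum, Finset.sum_mul]
      refine Finset.sum_congr rfl fun i _ => ?_
      have hx : C.uu σ j * C.uu τ i ∈ g.grade (τ ≫ σ) :=
        g.mul_mem σ τ _ (C.uu_mem σ j) _ (C.uu_mem τ i)
      have key : C.uu σ j * C.uu τ i * r = C.uu σ j * C.uu τ i * w := hxr (τ ≫ σ) _ hx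
      calc C.uu σ j * (C.uu τ i * r * C.vv τ i) * C.vv σ j
          = (C.uu σ j * C.uu τ i * r) * (C.vv τ i * C.vv σ j) := by noncomm_ring
        _ = (C.uu σ j * C.uu τ i * w) * (C.vv τ i * C.vv σ j) := by rw [key]
    -- each summand of A is in grade (𝟙 c)
    have hAmemterm : ∀ j i, C.uu σ j * C.uu τ i * w * (C.vv τ i * C.vv σ j) ∈ g.grade (𝟙 c) := by
      intro j i
      have m1 : C.uu σ j * C.uu τ i ∈ g.grade (τ ≫ σ) :=
        g.mul_mem σ τ _ (C.uu_mem σ j) _ (C.uu_mem τ i)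
      have m2 : C.uu σ j * C.uu τ i * w ∈ g.grade (𝟙 a ≫ τ ≫ σ) :=
        g.mul_mem _ _ _ m1 _ (hmemcc a)
      have m3 : C.vv τ i * C.vv σ j ∈ g.grade (Groupoid.inv σ ≫ Groupoid.inv τ) :=
        g.mul_mem _ _ _ (C.vv_mem τ i) _ (C.vv_mem σ j)
      have m4 := g.mul_mem _ _ _ m2 _ m3
      simpa using m4
    have hAmem : A ∈ g.grade (𝟙 c) := by
      rw [hA]
      exact AddSubgroup.sum_mem _ fun j _ => AddSubgroup.sum_mem _ fun i _ => hAmemterm j i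
    -- the inner "strong" identity
    have hinner : (∑ j ∈ Finset.range (C.n σ), ∑ i ∈ Finset.range (C.n τ),
        (C.uu σ j * C.uu τ i) * (C.vv τ i * C.vv σ j)) = U.one c := by
      rw [← C.sum_eq σ]
      refine Finset.sum_congr rfl fun j _ => ?_
      have h1 : ∑ i ∈ Finset.range (C.n τ), (C.uu σ j * C.uu τ i) * (C.vv τ i * C.vv σ j)
          = C.uu σ j * (∑ i ∈ Finset.range (C.n τ), C.uu τ i * C.vv τ i) * C.vv σ j := by
        rw [Finset.mul_sum, Finset.sum_mul]
        exact Finset.sum_congr rfl fun i _ => by noncomm_ring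
      rw [h1, C.sum_eq τ, U.mul_one σ _ (C.uu_mem σ j)]
    -- v_ρ^k * A = w * v_ρ^k
    have hvA : ∀ k, C.vv ρ k * A = w * C.vv ρ k := by
      intro k
      have per : ∀ j i, C.vv ρ k * (C.uu σ j * C.uu τ i * w * (C.vv τ i * C.vv σ j))
          = w * (C.vv ρ k * ((C.uu σ j * C.uu τ i) * (C.vv τ i * C.vv σ j))) := by
        intro j i
        have hz : C.vv ρ k * (C.uu σ j * C.uu τ i) ∈ g.grade (𝟙 a) := by
          have m1 : C.uu σ j * C.uu τ i ∈ g.grade (τ ≫ σ) :=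
            g.mul_mem σ τ _ (C.uu_mem σ j) _ (C.uu_mem τ i)
          have m2 := g.mul_mem (Groupoid.inv ρ) (τ ≫ σ) _ (C.vv_mem ρ k) _ m1
          simpa [hρ] using m2
        have hc := hcomm _ hz
        calc C.vv ρ k * (C.uu σ j * C.uu τ i * w * (C.vv τ i * C.vv σ j))
            = (C.vv ρ k * (C.uu σ j * C.uu τ i) * w) * (C.vv τ i * C.vv σ j) := by noncomm_ring
          _ = (w * (C.vv ρ k * (C.uu σ j * C.uu τ i))) * (C.vv τ i * C.vv σ j) := by rw [hc]
          _ = w * (C.vv ρ k * ((C.uu σ j * C.uu τ i) * (C.vv τ i * C.vv σ j))) := by noncomm_ring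
      calc C.vv ρ k * A
          = ∑ j ∈ Finset.range (C.n σ), ∑ i ∈ Finset.range (C.n τ),
              C.vv ρ k * (C.uu σ j * C.uu τ i * w * (C.vv τ i * C.vv σ j)) := by
            rw [hA, Finset.mul_sum]
            exact Finset.sum_congr rfl fun j _ => Finset.mul_sum _ _ _
        _ = ∑ j ∈ Finset.range (C.n σ), ∑ i ∈ Finset.range (C.n τ),
              w * (C.vv ρ k * ((C.uu σ j * C.uu τ i) * (C.vv τ i * C.vv σ j))) := by
            exact Finset.sum_congr rfl fun j _ => Finset.sum_congr rfl fun i _ => per j i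
        _ = w * (C.vv ρ k * ∑ j ∈ Finset.range (C.n σ), ∑ i ∈ Finset.range (C.n τ),
              (C.uu σ j * C.uu τ i) * (C.vv τ i * C.vv σ j)) := by
            rw [Finset.mul_sum, Finset.mul_sum]
            exact Finset.sum_congr rfl fun j _ => by rw [Finset.mul_sum, Finset.mul_sum]
        _ = w * (C.vv ρ k * U.one c) := by rw [hinner]
        _ = w * C.vv ρ k := by rw [U.mul_one (Groupoid.inv ρ) _ (C.vv_mem ρ k)]
    -- one c * A = gam ρ w
    have step2 : U.one c * A = C.gam ρ w := by
      rw [← C.sum_eq ρ, Finset.sum_mul]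
      show (∑ k ∈ Finset.range (C.n ρ), C.uu ρ k * C.vv ρ k * A)
          = ∑ k ∈ Finset.range (C.n ρ), C.uu ρ k * w * C.vv ρ k
      refine Finset.sum_congr rfl fun k _ => ?_
      rw [mul_assoc, hvA k, ← mul_assoc]
    have step3 : U.one c * A = A := U.one_mul (𝟙 c) A hAmem
    -- gam ρ w * one c = gam ρ w
    have hgmem : C.gam ρ w ∈ g.grade (𝟙 c) := by
      apply AddSubgroup.sum_mem
      intro k _
      have m1 : C.uu ρ k * w ∈ g.grade (𝟙 a ≫ ρ) :=
        g.mul_mem _ _ _ (C.uu_mem ρ k) _ (hmemcc a)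
      have m2 := g.mul_mem _ _ _ m1 _ (C.vv_mem ρ k)
      simpa [hρ] using m2
    have step4 : C.gam ρ w * U.one c = C.gam ρ w := U.mul_one (𝟙 c) _ hgmem
    rw [step1, ← step3, step2, step4]
end

section
/- Let 𝒢 be a groupoid and let R be an object unital strongly 𝒢-graded ring, with the maps γ_σ defined from a fixed choice of elements u_σ^{(i)}, v_{σ⁻¹}^{(i)}. For every morphism σ: the map γ_σ restricts to a surjective ring homomorphism Z(R_0) → Z(R_{r(σ)}) with γ_σ(1_{R_{d(σ)}}) = 1_{R_{r(σ)}}; this map restricts further to a ring isomorphism Z(R_{d(σ)}) → Z(R_{r(σ)}); and for every composable pair (σ,τ) and every r ∈ Z(R_{d(τ)}) one has γ_σ(γ_τ(r)) = γ_{στ}(r). -/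
open CategoryTheory

universe u v

section Aux
variable {𝒢 : Type u} [Groupoid 𝒢] {R : Type v} [NonUnitalRing R]
  {g : GroupoidGrading 𝒢 R} {U : ObjectUnital g} (C : StrongChoice g U)

lemma grade_le_R0 (e : 𝒢) : g.grade (𝟙 e) ≤ R0 g :=
  le_iSup (fun e => g.grade (𝟙 e)) e

lemma inv_comp_eq {a b c : 𝒢} (σ : b ⟶ c) (τ : a ⟶ b) :
    Groupoid.inv (τ ≫ σ) = Groupoid.inv σ ≫ Groupoid.inv τ := by
  simp [Groupoid.inv_eq_inv]

lemma StrongChoice.gam_mem {e f : 𝒢} (σ : e ⟶ f) {r : R} (hr : r ∈ R0 g) :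
    C.gam σ r ∈ g.grade (𝟙 f) := by
  refine AddSubgroup.sum_mem _ fun i _ => ?_
  refine AddSubgroup.iSup_induction (C := fun r => C.uu σ i * r * C.vv σ i ∈ g.grade (𝟙 f))
    (fun e' => g.grade (𝟙 e')) hr ?_ (by simpa using AddSubgroup.zero_mem _) ?_
  · intro e' x hx
    by_cases h : e' = e
    · subst h
      have h1 : C.uu σ i * x ∈ g.grade σ := by
        have := g.mul_mem σ (𝟙 e') _ (C.uu_mem σ i) _ hx
        rwa [Category.id_comp] at this
      have h2 := g.mul_mem σ (Groupoid.inv σ) _ h1 _ (C.vv_mem σ i)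
      rwa [Groupoid.inv_comp] at h2
    · rw [g.mul_eq_zero σ (𝟙 e') h _ (C.uu_mem σ i) _ hx, zero_mul]
      exact AddSubgroup.zero_mem _
  · intro x y hx hy
    have : C.uu σ i * (x + y) * C.vv σ i
        = C.uu σ i * x * C.vv σ i + C.uu σ i * y * C.vv σ i := by
      rw [mul_add, add_mul]
    rw [this]
    exact AddSubgroup.add_mem _ hx hy

lemma StrongChoice.gam_mul_right {e f : 𝒢} (σ : e ⟶ f) {r : R}
    (hr : ∀ x ∈ g.grade (𝟙 e), r * x = x * r) {s : R} (hs : s ∈ g.grade σ) :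
    C.gam σ r * s = s * r := by
  have key : ∀ i, C.uu σ i * r * C.vv σ i * s = C.uu σ i * C.vv σ i * s * r := by
    intro i
    have hm : C.vv σ i * s ∈ g.grade (𝟙 e) := by
      have := g.mul_mem (Groupoid.inv σ) σ _ (C.vv_mem σ i) _ hs
      rwa [Groupoid.comp_inv] at this
    calc C.uu σ i * r * C.vv σ i * s
        = C.uu σ i * (r * (C.vv σ i * s)) := by simp only [mul_assoc]
      _ = C.uu σ i * ((C.vv σ i * s) * r) := by rw [hr _ hm]
      _ = C.uu σ i * C.vv σ i * s * r := by simp only [mul_assoc]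
  calc C.gam σ r * s
      = ∑ i ∈ Finset.range (C.n σ), C.uu σ i * r * C.vv σ i * s := Finset.sum_mul _ _ _
    _ = ∑ i ∈ Finset.range (C.n σ), C.uu σ i * C.vv σ i * s * r :=
        Finset.sum_congr rfl fun i _ => key i
    _ = (∑ i ∈ Finset.range (C.n σ), C.uu σ i * C.vv σ i) * s * r := by
        rw [Finset.sum_mul, Finset.sum_mul]
    _ = s * r := by rw [C.sum_eq, U.one_mul σ s hs]

lemma StrongChoice.gam_indep {a c : 𝒢} (ρ : a ⟶ c) {ι : Type} (I : Finset ι) (s t : ι → R)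
    (hs : ∀ k ∈ I, s k ∈ g.grade ρ) (ht : ∀ k ∈ I, t k ∈ g.grade (Groupoid.inv ρ))
    (hsum : ∑ k ∈ I, s k * t k = U.one c) {r : R}
    (hr : ∀ x ∈ g.grade (𝟙 a), r * x = x * r) :
    ∑ k ∈ I, s k * r * t k = C.gam ρ r := by
  have key : ∀ k ∈ I, ∀ j, C.uu ρ j * C.vv ρ j * s k * r * t k
      = C.uu ρ j * r * C.vv ρ j * (s k * t k) := by
    intro k hk j
    have hm : C.vv ρ j * s k ∈ g.grade (𝟙 a) := by
      have := g.mul_mem (Groupoid.inv ρ) ρ _ (C.vv_mem ρ j) _ (hs k hk)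
      rwa [Groupoid.comp_inv] at this
    calc C.uu ρ j * C.vv ρ j * s k * r * t k
        = C.uu ρ j * ((C.vv ρ j * s k) * r) * t k := by simp only [mul_assoc]
      _ = C.uu ρ j * (r * (C.vv ρ j * s k)) * t k := by rw [hr _ hm]
      _ = C.uu ρ j * r * C.vv ρ j * (s k * t k) := by simp only [mul_assoc]
  calc ∑ k ∈ I, s k * r * t k
      = ∑ k ∈ I, U.one c * s k * r * t k :=
        Finset.sum_congr rfl fun k hk => by rw [U.one_mul ρ _ (hs k hk)]
    _ = ∑ k ∈ I, ∑ j ∈ Finset.range (C.n ρ), C.uu ρ j * C.vv ρ j * s k * r * t k := by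
        refine Finset.sum_congr rfl fun k hk => ?_
        rw [← C.sum_eq ρ, Finset.sum_mul, Finset.sum_mul, Finset.sum_mul]
    _ = ∑ j ∈ Finset.range (C.n ρ), ∑ k ∈ I, C.uu ρ j * r * C.vv ρ j * (s k * t k) := by
        rw [Finset.sum_comm]
        exact Finset.sum_congr rfl fun j _ => Finset.sum_congr rfl fun k hk => key k hk j
    _ = ∑ j ∈ Finset.range (C.n ρ), C.uu ρ j * r * C.vv ρ j * (∑ k ∈ I, s k * t k) :=
        Finset.sum_congr rfl fun j _ => (Finset.mul_sum _ _ _).symm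
    _ = C.gam ρ r := by
        rw [hsum]
        exact Finset.sum_congr rfl fun j _ => by
          rw [mul_assoc (C.uu ρ j * r), U.mul_one (Groupoid.inv ρ) _ (C.vv_mem ρ j)]

lemma StrongChoice.gam_one {e f : 𝒢} (σ : e ⟶ f) : C.gam σ (U.one e) = U.one f := by
  rw [← C.sum_eq σ]
  exact Finset.sum_congr rfl fun i _ => by
    show C.uu σ i * U.one e * C.vv σ i = C.uu σ i * C.vv σ i
    rw [U.mul_one σ _ (C.uu_mem σ i)]

lemma StrongChoice.gam_mul {e f : 𝒢} (σ : e ⟶ f) {r : R}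
    (hr : ∀ x ∈ g.grade (𝟙 e), r * x = x * r) (r' : R) :
    C.gam σ (r * r') = C.gam σ r * C.gam σ r' := by
  symm
  calc C.gam σ r * C.gam σ r'
      = ∑ j ∈ Finset.range (C.n σ), C.gam σ r * (C.uu σ j * r' * C.vv σ j) :=
        Finset.mul_sum _ _ _
    _ = ∑ j ∈ Finset.range (C.n σ), C.uu σ j * (r * r') * C.vv σ j := by
        refine Finset.sum_congr rfl fun j _ => ?_
        have h := C.gam_mul_right σ hr (C.uu_mem σ j)
        calc C.gam σ r * (C.uu σ j * r' * C.vv σ j)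
            = C.gam σ r * C.uu σ j * r' * C.vv σ j := by simp only [mul_assoc]
          _ = C.uu σ j * r * r' * C.vv σ j := by rw [h]
          _ = C.uu σ j * (r * r') * C.vv σ j := by rw [mul_assoc (C.uu σ j)]
    _ = C.gam σ (r * r') := rfl

lemma StrongChoice.gam_comm {e f : 𝒢} (σ : e ⟶ f) {r : R}
    (hr : ∀ x ∈ g.grade (𝟙 e), r * x = x * r) :
    ∀ x ∈ g.grade (𝟙 f), C.gam σ r * x = x * C.gam σ r := by
  intro x hx
  symm
  have hxu : ∀ i, x * C.uu σ i ∈ g.grade σ := by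
    intro i
    have := g.mul_mem (𝟙 f) σ _ hx _ (C.uu_mem σ i)
    rwa [Category.comp_id] at this
  calc x * C.gam σ r
      = ∑ i ∈ Finset.range (C.n σ), x * (C.uu σ i * r * C.vv σ i) := Finset.mul_sum _ _ _
    _ = ∑ i ∈ Finset.range (C.n σ), C.gam σ r * x * (C.uu σ i * C.vv σ i) := by
        refine Finset.sum_congr rfl fun i _ => ?_
        have h := C.gam_mul_right σ hr (hxu i)
        calc x * (C.uu σ i * r * C.vv σ i)
            = (x * C.uu σ i) * r * C.vv σ i := by simp only [mul_assoc]
          _ = C.gam σ r * (x * C.uu σ i) * C.vv σ i := by rw [h]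
          _ = C.gam σ r * x * (C.uu σ i * C.vv σ i) := by simp only [mul_assoc]
    _ = C.gam σ r * x * (∑ i ∈ Finset.range (C.n σ), C.uu σ i * C.vv σ i) :=
        (Finset.mul_sum _ _ _).symm
    _ = C.gam σ r * x := by
        rw [C.sum_eq, mul_assoc, U.mul_one (𝟙 f) x hx]

lemma StrongChoice.gam_comp {a b c : 𝒢} (σ : b ⟶ c) (τ : a ⟶ b) {r : R}
    (hr : ∀ x ∈ g.grade (𝟙 a), r * x = x * r) :
    C.gam σ (C.gam τ r) = C.gam (τ ≫ σ) r := by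
  have expand : C.gam σ (C.gam τ r)
      = ∑ p ∈ Finset.range (C.n σ) ×ˢ Finset.range (C.n τ),
          (C.uu σ p.1 * C.uu τ p.2) * r * (C.vv τ p.2 * C.vv σ p.1) := by
    rw [Finset.sum_product]
    refine Finset.sum_congr rfl fun i _ => ?_
    show C.uu σ i * C.gam τ r * C.vv σ i = _
    rw [StrongChoice.gam, Finset.mul_sum, Finset.sum_mul]
    refine Finset.sum_congr rfl fun j _ => ?_
    simp only [mul_assoc]
  rw [expand]
  refine C.gam_indep (τ ≫ σ) _ _ _ ?_ ?_ ?_ hr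
  · rintro ⟨i, j⟩ -
    exact g.mul_mem σ τ _ (C.uu_mem σ i) _ (C.uu_mem τ j)
  · rintro ⟨i, j⟩ -
    rw [inv_comp_eq]
    exact g.mul_mem (Groupoid.inv τ) (Groupoid.inv σ) _ (C.vv_mem τ j) _ (C.vv_mem σ i)
  · rw [Finset.sum_product]
    calc ∑ i ∈ Finset.range (C.n σ), ∑ j ∈ Finset.range (C.n τ),
          C.uu σ i * C.uu τ j * (C.vv τ j * C.vv σ i)
        = ∑ i ∈ Finset.range (C.n σ),
            C.uu σ i * (∑ j ∈ Finset.range (C.n τ), C.uu τ j * C.vv τ j) * C.vv σ i := by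
          refine Finset.sum_congr rfl fun i _ => ?_
          rw [Finset.mul_sum, Finset.sum_mul]
          refine Finset.sum_congr rfl fun j _ => ?_
          simp only [mul_assoc]
      _ = ∑ i ∈ Finset.range (C.n σ), C.uu σ i * C.vv σ i := by
          refine Finset.sum_congr rfl fun i _ => ?_
          rw [C.sum_eq τ, mul_assoc, U.one_mul (Groupoid.inv σ) _ (C.vv_mem σ i)]
      _ = U.one c := C.sum_eq σ

lemma StrongChoice.gam_id {e : 𝒢} {r : R} (hr : r ∈ g.grade (𝟙 e)) :
    C.gam (𝟙 e) r = r := by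
  rw [StrongChoice.gam, C.n_id, Finset.sum_range_one, C.uu_id, C.vv_id,
    U.one_mul (𝟙 e) r hr, U.mul_one (𝟙 e) r hr]

lemma memZR0_of_memZRe {e : 𝒢} {r : R} (h : memZRe g e r) : memZR0 g r := by
  refine ⟨grade_le_R0 e h.1, ?_⟩
  intro x hx
  refine AddSubgroup.iSup_induction (C := fun x => r * x = x * r)
    (fun e' => g.grade (𝟙 e')) hx ?_ (by show r * 0 = 0 * r; rw [mul_zero, zero_mul]) ?_
  · intro e' y hy
    by_cases he : e' = e
    · subst he; exact h.2 y hy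
    · rw [g.mul_eq_zero (𝟙 e) (𝟙 e') he r h.1 y hy,
        g.mul_eq_zero (𝟙 e') (𝟙 e) (Ne.symm he) y hy r h.1]
  · intro x y hx hy
    rw [mul_add, add_mul, hx, hy]

end Aux

/-- For every morphism `σ : e ⟶ f` of `𝒢`, the map `γ_σ` restricts to
a surjective ring homomorphism `Z(R_0) → Z(R_{r(σ)})` (sending `1_{R_{d(σ)}}` to
`1_{R_{r(σ)}}`); this map restricts further to a ring isomorphism
`Z(R_{d(σ)}) → Z(R_{r(σ)})`; and `γ_σ ∘ γ_τ = γ_{στ}` on `Z(R_{d(τ)})` for composable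
pairs `(σ,τ)`. -/
theorem stmt16 {𝒢 : Type u} [Groupoid 𝒢] {R : Type v} [NonUnitalRing R]
    (g : GroupoidGrading 𝒢 R) (U : ObjectUnital g) (C : StrongChoice g U) :
    -- `γ_σ` maps `Z(R_0)` into `Z(R_{r(σ)})` …
    (∀ ⦃e f : 𝒢⦄ (σ : e ⟶ f), ∀ r : R, memZR0 g r → memZRe g f (C.gam σ r)) ∧
    -- … additively (clear) and multiplicatively, i.e. it is a ring homomorphism …
    (∀ ⦃e f : 𝒢⦄ (σ : e ⟶ f), ∀ r r' : R, memZR0 g r → memZR0 g r' →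
      C.gam σ (r * r') = C.gam σ r * C.gam σ r') ∧
    -- … respecting the multiplicative identities …
    (∀ ⦃e f : 𝒢⦄ (σ : e ⟶ f), C.gam σ (U.one e) = U.one f) ∧
    -- … and surjectively onto `Z(R_{r(σ)})`
    (∀ ⦃e f : 𝒢⦄ (σ : e ⟶ f), ∀ t : R, memZRe g f t →
      ∃ r : R, memZR0 g r ∧ C.gam σ r = t) ∧
    -- it restricts to a bijection (hence a ring isomorphism) `Z(R_{d(σ)}) → Z(R_{r(σ)})`
    (∀ ⦃e f : 𝒢⦄ (σ : e ⟶ f), ∀ r : R, memZRe g e r → memZRe g f (C.gam σ r)) ∧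
    (∀ ⦃e f : 𝒢⦄ (σ : e ⟶ f), ∀ r r' : R, memZRe g e r → memZRe g e r' →
      C.gam σ r = C.gam σ r' → r = r') ∧
    (∀ ⦃e f : 𝒢⦄ (σ : e ⟶ f), ∀ t : R, memZRe g f t →
      ∃ r : R, memZRe g e r ∧ C.gam σ r = t) ∧
    -- and `γ_σ(γ_τ(r)) = γ_{στ}(r)` for composable `(σ,τ)` and `r ∈ Z(R_{d(τ)})`
    (∀ ⦃a b c : 𝒢⦄ (σ : b ⟶ c) (τ : a ⟶ b), ∀ r : R, memZRe g a r →
      C.gam σ (C.gam τ r) = C.gam (τ ≫ σ) r) := by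
  have restr : ∀ {e : 𝒢} {r : R}, memZR0 g r → ∀ x ∈ g.grade (𝟙 e), r * x = x * r :=
    fun {e} {r} hr x hx => hr.2 x (grade_le_R0 e hx)
  refine ⟨?_, ?_, ?_, ?_, ?_, ?_, ?_, ?_⟩
  · intro e f σ r hr
    exact ⟨C.gam_mem σ hr.1, C.gam_comm σ (restr hr)⟩
  · intro e f σ r r' hr _
    exact C.gam_mul σ (restr hr) r'
  · intro e f σ
    exact C.gam_one σ
  · intro e f σ t ht
    refine ⟨C.gam (Groupoid.inv σ) t,
      memZR0_of_memZRe ⟨C.gam_mem (Groupoid.inv σ) (grade_le_R0 f ht.1),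
        C.gam_comm (Groupoid.inv σ) ht.2⟩, ?_⟩
    rw [C.gam_comp σ (Groupoid.inv σ) ht.2, Groupoid.inv_comp]
    exact C.gam_id ht.1
  · intro e f σ r hr
    exact ⟨C.gam_mem σ (grade_le_R0 e hr.1), C.gam_comm σ hr.2⟩
  · intro e f σ r r' hr hr' heq
    have h1 := C.gam_comp (Groupoid.inv σ) σ hr.2
    have h2 := C.gam_comp (Groupoid.inv σ) σ hr'.2
    rw [heq, h2] at h1
    rw [Groupoid.comp_inv] at h1
    rw [C.gam_id hr'.1, C.gam_id hr.1] at h1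
    exact h1.symm
  · intro e f σ t ht
    refine ⟨C.gam (Groupoid.inv σ) t,
      ⟨C.gam_mem (Groupoid.inv σ) (grade_le_R0 f ht.1),
        C.gam_comm (Groupoid.inv σ) ht.2⟩, ?_⟩
    rw [C.gam_comp σ (Groupoid.inv σ) ht.2, Groupoid.inv_comp]
    exact C.gam_id ht.1
  · intro a b c σ τ r hr
    exact C.gam_comp σ τ hr.2
end

section
/- Let 𝒢 be a groupoid and let R be an object unital strongly 𝒢-graded ring, with the maps γ_σ defined from a fixed choice of elements u_σ^{(i)}, v_{σ⁻¹}^{(i)}. If σ is a morphism, r ∈ R_σ and x ∈ Z(R_{d(σ)}), then r x = γ_σ(x) r. -/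
open CategoryTheory

universe u v

/-- If `σ` is a morphism, `r ∈ R_σ` and `x ∈ Z(R_{d(σ)})`, then
`r x = γ_σ(x) r`. -/
theorem stmt17 {𝒢 : Type u} [Groupoid 𝒢] {R : Type v} [NonUnitalRing R]
    (g : GroupoidGrading 𝒢 R) (U : ObjectUnital g) (C : StrongChoice g U)
    ⦃e f : 𝒢⦄ (σ : e ⟶ f) (r x : R)
    (hr : r ∈ g.grade σ) (hx : memZRe g e x) :
    r * x = C.gam σ x * r := by
  have hvr : ∀ i, C.vv σ i * r ∈ g.grade (𝟙 e) := fun i => by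
    have := g.mul_mem (Groupoid.inv σ) σ (C.vv σ i) (C.vv_mem σ i) r hr
    simpa using this
  have key : ∀ i, C.uu σ i * x * C.vv σ i * r = C.uu σ i * C.vv σ i * (r * x) := by
    intro i
    have h1 : x * (C.vv σ i * r) = (C.vv σ i * r) * x := hx.2 _ (hvr i)
    calc C.uu σ i * x * C.vv σ i * r = C.uu σ i * (x * (C.vv σ i * r)) := by simp only [mul_assoc]
      _ = C.uu σ i * ((C.vv σ i * r) * x) := by rw [h1]
      _ = C.uu σ i * C.vv σ i * (r * x) := by simp only [mul_assoc]
  have hrx : r * x ∈ g.grade σ := by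
    have := g.mul_mem σ (𝟙 e) r hr x hx.1
    simpa using this
  calc r * x = U.one f * (r * x) := (U.one_mul σ _ hrx).symm
    _ = (∑ i ∈ Finset.range (C.n σ), C.uu σ i * C.vv σ i) * (r * x) := by rw [C.sum_eq σ]
    _ = ∑ i ∈ Finset.range (C.n σ), C.uu σ i * C.vv σ i * (r * x) := by
        rw [Finset.sum_mul]
    _ = ∑ i ∈ Finset.range (C.n σ), C.uu σ i * x * C.vv σ i * r := by
        exact Finset.sum_congr rfl (fun i _ => (key i).symm)
    _ = C.gam σ x * r := by rw [StrongChoice.gam, Finset.sum_mul]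
end
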